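/- arXiv:2111.13896 — 7 statements merged into one kernel-verified Lean document; each statement's English description precedes it below -/
import Mathlib

section
/- Let C₀, C_JN > 0 be constants for which the John–Nirenberg inequality holds on ℝ (for every locally integrable u : ℝ → ℂ with 0 < ‖u‖_* < ∞, every bounded interval I ⊂ ℝ, and every λ > 0, one has |{t ∈ I : |u(t) − u_I| ≥ λ}| ≤ C₀ |I| exp(−C_JN λ / ‖u‖_*)). Let ω : ℝ → (0,∞) be a weight such that u = log ω is locally integrable and 0 < ‖u‖_* < C_JN. Set C(ω) = (C₀‖u‖_*/(C_JN − ‖u‖_*) + 1)². Then for every bounded interval I ⊂ ℝ one has both the A₂-inequality ( (1/|I|)∫_I ω(x)dx ) · ( (1/|I|)∫_I ω(x)^{-1}dx ) ≤ C(ω) and the A_∞-inequality (1/|I|)∫_I ω(x)dx ≤ C(ω) exp( (1/|I|)∫_I log ω(x) dx ). -/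
open MeasureTheory Set Filter Topology
open scoped ENNReal

/-- The average of `u` over the bounded interval `(a, b)`. -/
noncomputable def intervalAvg (u : ℝ → ℂ) (a b : ℝ) : ℂ :=
  (b - a)⁻¹ • ∫ t in Set.Ioo a b, u t

/-- The mean oscillation of `u` over the bounded interval `(a, b)`. -/
noncomputable def oscAvg (u : ℝ → ℂ) (a b : ℝ) : ℝ :=
  (b - a)⁻¹ * ∫ t in Set.Ioo a b, ‖u t - intervalAvg u a b‖

/-- The BMO seminorm `‖u‖_*` (as an extended real, `⊤` meaning `u ∉ BMO`). -/
noncomputable def bmoNorm (u : ℝ → ℂ) : ℝ≥0∞ :=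
  ⨆ (a : ℝ) (b : ℝ) (_ : a < b), ENNReal.ofReal (oscAvg u a b)

/-- The John–Nirenberg inequality holds on `ℝ` with constants `C₀, CJN`. -/
def JNineq (C₀ CJN : ℝ) : Prop :=
  ∀ u : ℝ → ℂ, MeasureTheory.LocallyIntegrable u →
    0 < bmoNorm u → bmoNorm u ≠ ⊤ →
    ∀ a b : ℝ, a < b → ∀ lam : ℝ, 0 < lam →
      MeasureTheory.volume {t ∈ Set.Ioo a b | lam ≤ ‖u t - intervalAvg u a b‖} ≤
        ENNReal.ofReal (C₀ * (b - a) * Real.exp (-(CJN * lam) / (bmoNorm u).toReal))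

/-- The homogeneous `p`-Besov seminorm `‖u‖_{B_p}`. -/
noncomputable def besovNorm (p : ℝ) (u : ℝ → ℂ) : ℝ≥0∞ :=
  (∫⁻ t : ℝ, ∫⁻ s : ℝ, ENNReal.ofReal (‖u t - u s‖ ^ p / (t - s) ^ 2)) ^ (1 / p)

/-- The dilated kernel `φ_y(x) = y⁻¹ φ(y⁻¹ x)`. -/
noncomputable def dil (φ : ℝ → ℂ) (y x : ℝ) : ℂ := (y : ℂ)⁻¹ * φ (x / y)

lemma lintegral_exp_neg_mul_Ioi' {c : ℝ} (hc : 0 < c) :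
    ∫⁻ t in Set.Ioi (0:ℝ), ENNReal.ofReal (Real.exp (-c * t)) = ENNReal.ofReal c⁻¹ := by
  rw [← ofReal_integral_eq_lintegral_ofReal (exp_neg_integrableOn_Ioi 0 hc)
      (Filter.Eventually.of_forall fun t => (Real.exp_pos _).le)]
  congr 1
  have h := integral_comp_mul_left_Ioi (fun x => Real.exp (-x)) 0 hc
  simp only [mul_zero, integral_exp_neg_Ioi, neg_zero, Real.exp_zero, smul_eq_mul, mul_one,
    neg_mul] at h ⊢
  exact h


/-- a weight whose logarithm has small BMO norm satisfies the `A₂`- and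
`A_∞`-inequalities with constant `C(ω) = (C₀‖u‖_*/(C_JN − ‖u‖_*) + 1)²`. -/
theorem stmt0 (C₀ CJN : ℝ) (hC₀ : 0 < C₀) (hCJN : 0 < CJN) (hJN : JNineq C₀ CJN)
    (ω : ℝ → ℝ) (hωmeas : Measurable ω) (hωpos : ∀ x, 0 < ω x)
    (hu : LocallyIntegrable (fun x => (Real.log (ω x) : ℂ)))
    (h0 : 0 < bmoNorm (fun x => (Real.log (ω x) : ℂ)))
    (h1 : bmoNorm (fun x => (Real.log (ω x) : ℂ)) < ENNReal.ofReal CJN)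
    (nu : ℝ) (hnu : nu = (bmoNorm (fun x => (Real.log (ω x) : ℂ))).toReal)
    (Cω : ℝ) (hCω : Cω = (C₀ * nu / (CJN - nu) + 1) ^ 2) :
    ∀ a b : ℝ, a < b →
      ((∫⁻ x in Set.Ioo a b, ENNReal.ofReal (ω x)) *
          (∫⁻ x in Set.Ioo a b, ENNReal.ofReal ((ω x)⁻¹)) ≤
        ENNReal.ofReal (Cω * (b - a) ^ 2)) ∧
      (∫⁻ x in Set.Ioo a b, ENNReal.ofReal (ω x)) ≤
        ENNReal.ofReal (Cω * (b - a) *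
          Real.exp ((b - a)⁻¹ * ∫ x in Set.Ioo a b, Real.log (ω x))) := by
  intro a b hab
  set u : ℝ → ℂ := fun x => (Real.log (ω x) : ℂ) with hu_def
  have hBne : bmoNorm u ≠ ⊤ := ne_top_of_lt h1
  have hν : 0 < nu := by rw [hnu]; exact ENNReal.toReal_pos h0.ne' hBne
  have hνC : nu < CJN := by rw [hnu]; exact ENNReal.toReal_lt_of_lt_ofReal h1
  have hba : (0:ℝ) < b - a := sub_pos.2 hab
  set g : ℝ → ℝ := fun x => Real.log (ω x) with hg_def
  have hgmeas : Measurable g := Real.measurable_log.comp hωmeas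
  set m : ℝ := (b - a)⁻¹ * ∫ x in Set.Ioo a b, g x with hm_def
  have hAvg : intervalAvg u a b = (m : ℂ) := by
    unfold intervalAvg
    have hco : ∫ t in Set.Ioo a b, ((g t : ℝ) : ℂ) = ((∫ t in Set.Ioo a b, g t : ℝ) : ℂ) :=
      integral_ofReal
    rw [show (fun t => u t) = (fun t => ((g t : ℝ) : ℂ)) from rfl] at hco ⊢
    rw [hco, Complex.real_smul]
    push_cast [hm_def]
    ring
  set f : ℝ → ℝ := fun x => ‖u x - intervalAvg u a b‖ with hf_def
  have hnormf : ∀ x, f x = |g x - m| := by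
    intro x
    rw [hf_def]
    simp only [hAvg]
    rw [show u x - (m : ℂ) = ((g x - m : ℝ) : ℂ) by push_cast; ring]
    rw [Complex.norm_real, Real.norm_eq_abs]
  have hfmeas : Measurable f :=
    ((Complex.measurable_ofReal.comp hgmeas).sub measurable_const).norm
  have hfnn : ∀ x, 0 ≤ f x := fun x => norm_nonneg _
  set K : ℝ := C₀ * nu / (CJN - nu) + 1 with hK_def
  have hKnum : 0 ≤ C₀ * nu / (CJN - nu) :=
    div_nonneg (mul_nonneg hC₀.le hν.le) (sub_pos.2 hνC).le
  have hK1 : (1:ℝ) ≤ K := by rw [hK_def]; linarith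
  have hK0 : (0:ℝ) < K := lt_of_lt_of_le one_pos hK1
  -- the key estimate
  have key : ∫⁻ x in Set.Ioo a b, ENNReal.ofReal (Real.exp (f x)) ≤
      ENNReal.ofReal (K * (b - a)) := by
    have layer := lintegral_comp_eq_lintegral_meas_le_mul (volume.restrict (Set.Ioo a b))
      (Filter.Eventually.of_forall hfnn) hfmeas.aemeasurable (g := Real.exp)
      (fun t _ => Real.continuous_exp.intervalIntegrable 0 t)
      (Filter.Eventually.of_forall fun t => (Real.exp_pos t).le)
    have hsub : ∫⁻ x in Set.Ioo a b, ENNReal.ofReal (Real.exp (f x) - 1) ≤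
        ENNReal.ofReal (C₀ * (b - a) * (nu / (CJN - nu))) := by
      have heq : (fun x => ENNReal.ofReal (Real.exp (f x) - 1)) =
          fun x => ENNReal.ofReal (∫ t in (0:ℝ)..f x, Real.exp t) := by
        funext x; rw [integral_exp, Real.exp_zero]
      rw [heq, layer]
      have hbound : ∀ t ∈ Set.Ioi (0:ℝ),
          (volume.restrict (Set.Ioo a b)) {x | t ≤ f x} * ENNReal.ofReal (Real.exp t) ≤
          ENNReal.ofReal (C₀ * (b - a)) *
            ENNReal.ofReal (Real.exp (-((CJN - nu) / nu) * t)) := by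
        intro t ht
        have hmeasure : (volume.restrict (Set.Ioo a b)) {x | t ≤ f x} =
            volume {x ∈ Set.Ioo a b | t ≤ f x} := by
          rw [Measure.restrict_apply (measurableSet_le measurable_const hfmeas)]
          congr 1
          ext x
          simp [Set.mem_sep_iff, and_comm]
        rw [hmeasure]
        have hJNb := hJN u hu h0 hBne a b hab t ht
        calc volume {x ∈ Set.Ioo a b | t ≤ f x} * ENNReal.ofReal (Real.exp t)
            ≤ ENNReal.ofReal (C₀ * (b - a) * Real.exp (-(CJN * t) / (bmoNorm u).toReal)) *
              ENNReal.ofReal (Real.exp t) := by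
              exact mul_le_mul_left hJNb _
          _ = ENNReal.ofReal (C₀ * (b - a)) *
              ENNReal.ofReal (Real.exp (-((CJN - nu) / nu) * t)) := by
              rw [← ENNReal.ofReal_mul (by positivity), ← ENNReal.ofReal_mul (by positivity)]
              congr 1
              rw [mul_assoc, ← Real.exp_add]
              congr 2
              rw [← hnu]
              field_simp
              ring
      calc ∫⁻ t in Set.Ioi (0:ℝ),
            (volume.restrict (Set.Ioo a b)) {x | t ≤ f x} * ENNReal.ofReal (Real.exp t)
          ≤ ∫⁻ t in Set.Ioi (0:ℝ), ENNReal.ofReal (C₀ * (b - a)) *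
              ENNReal.ofReal (Real.exp (-((CJN - nu) / nu) * t)) :=
            setLIntegral_mono' measurableSet_Ioi hbound
        _ = ENNReal.ofReal (C₀ * (b - a)) *
            ∫⁻ t in Set.Ioi (0:ℝ), ENNReal.ofReal (Real.exp (-((CJN - nu) / nu) * t)) :=
            lintegral_const_mul' _ _ ENNReal.ofReal_ne_top
        _ = ENNReal.ofReal (C₀ * (b - a)) * ENNReal.ofReal (((CJN - nu) / nu)⁻¹) := by
            rw [lintegral_exp_neg_mul_Ioi' (div_pos (sub_pos.2 hνC) hν)]
        _ = ENNReal.ofReal (C₀ * (b - a) * (nu / (CJN - nu))) := by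
            rw [← ENNReal.ofReal_mul (by positivity), inv_div]
    calc ∫⁻ x in Set.Ioo a b, ENNReal.ofReal (Real.exp (f x))
        = ∫⁻ x in Set.Ioo a b, (ENNReal.ofReal (Real.exp (f x) - 1) + ENNReal.ofReal 1) := by
          congr 1; funext x
          rw [← ENNReal.ofReal_add (by simpa using Real.one_le_exp (hfnn x)) zero_le_one]
          norm_num
      _ = (∫⁻ x in Set.Ioo a b, ENNReal.ofReal (Real.exp (f x) - 1)) +
          ∫⁻ _x in Set.Ioo a b, ENNReal.ofReal 1 := by
          rw [lintegral_add_right]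
          exact measurable_const
      _ ≤ ENNReal.ofReal (C₀ * (b - a) * (nu / (CJN - nu))) + ENNReal.ofReal (b - a) := by
          gcongr
          simp [Real.volume_Ioo]
      _ = ENNReal.ofReal (K * (b - a)) := by
          rw [← ENNReal.ofReal_add (mul_nonneg (mul_nonneg hC₀.le hba.le) (div_nonneg hν.le (sub_pos.2 hνC).le)) hba.le]
          congr 1
          rw [hK_def]
          field_simp
  -- bounds for ω and ω⁻¹
  have hP : ∫⁻ x in Set.Ioo a b, ENNReal.ofReal (ω x) ≤
      ENNReal.ofReal (Real.exp m) * ENNReal.ofReal (K * (b - a)) := by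
    calc ∫⁻ x in Set.Ioo a b, ENNReal.ofReal (ω x)
        = ∫⁻ x in Set.Ioo a b, ENNReal.ofReal (Real.exp m) *
            ENNReal.ofReal (Real.exp (g x - m)) := by
          congr 1; funext x
          rw [← ENNReal.ofReal_mul (Real.exp_pos m).le, ← Real.exp_add]
          congr 1
          rw [show m + (g x - m) = g x by ring]
          exact (Real.exp_log (hωpos x)).symm
      _ = ENNReal.ofReal (Real.exp m) *
          ∫⁻ x in Set.Ioo a b, ENNReal.ofReal (Real.exp (g x - m)) :=
          lintegral_const_mul' _ _ ENNReal.ofReal_ne_top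
      _ ≤ ENNReal.ofReal (Real.exp m) * ENNReal.ofReal (K * (b - a)) := by
          gcongr
          refine le_trans (lintegral_mono fun x => ?_) key
          apply ENNReal.ofReal_le_ofReal
          apply Real.exp_le_exp.2
          rw [hnormf x]
          exact le_abs_self _
  have hQ : ∫⁻ x in Set.Ioo a b, ENNReal.ofReal ((ω x)⁻¹) ≤
      ENNReal.ofReal (Real.exp (-m)) * ENNReal.ofReal (K * (b - a)) := by
    calc ∫⁻ x in Set.Ioo a b, ENNReal.ofReal ((ω x)⁻¹)
        = ∫⁻ x in Set.Ioo a b, ENNReal.ofReal (Real.exp (-m)) *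
            ENNReal.ofReal (Real.exp (m - g x)) := by
          congr 1; funext x
          rw [← ENNReal.ofReal_mul (Real.exp_pos _).le, ← Real.exp_add]
          congr 1
          rw [show -m + (m - g x) = -(g x) by ring, Real.exp_neg]
          rw [Real.exp_log (hωpos x)]
      _ = ENNReal.ofReal (Real.exp (-m)) *
          ∫⁻ x in Set.Ioo a b, ENNReal.ofReal (Real.exp (m - g x)) :=
          lintegral_const_mul' _ _ ENNReal.ofReal_ne_top
      _ ≤ ENNReal.ofReal (Real.exp (-m)) * ENNReal.ofReal (K * (b - a)) := by
          gcongr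
          refine le_trans (lintegral_mono fun x => ?_) key
          apply ENNReal.ofReal_le_ofReal
          apply Real.exp_le_exp.2
          rw [hnormf x]
          rw [abs_sub_comm]
          exact le_abs_self _
  constructor
  · calc (∫⁻ x in Set.Ioo a b, ENNReal.ofReal (ω x)) *
        (∫⁻ x in Set.Ioo a b, ENNReal.ofReal ((ω x)⁻¹))
        ≤ (ENNReal.ofReal (Real.exp m) * ENNReal.ofReal (K * (b - a))) *
          (ENNReal.ofReal (Real.exp (-m)) * ENNReal.ofReal (K * (b - a))) :=
          mul_le_mul' hP hQ
      _ = ENNReal.ofReal (Cω * (b - a) ^ 2) := by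
          rw [← ENNReal.ofReal_mul (Real.exp_pos m).le, ← ENNReal.ofReal_mul (by positivity),
            ← ENNReal.ofReal_mul (by positivity)]
          congr 1
          rw [hCω]
          rw [show Real.exp m * (K * (b - a)) * (Real.exp (-m) * (K * (b - a))) =
            (Real.exp m * Real.exp (-m)) * (K ^ 2 * (b - a) ^ 2) by ring]
          rw [← Real.exp_add, add_neg_cancel, Real.exp_zero, one_mul]
  · calc ∫⁻ x in Set.Ioo a b, ENNReal.ofReal (ω x)
        ≤ ENNReal.ofReal (Real.exp m) * ENNReal.ofReal (K * (b - a)) := hP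
      _ ≤ ENNReal.ofReal (Cω * (b - a) * Real.exp ((b - a)⁻¹ * ∫ x in Set.Ioo a b, g x)) := by
          rw [← ENNReal.ofReal_mul (Real.exp_pos m).le, ← hm_def]
          apply ENNReal.ofReal_le_ofReal
          rw [hCω]
          have hKsq : K ≤ K ^ 2 := by nlinarith
          calc Real.exp m * (K * (b - a)) = K * (b - a) * Real.exp m := by ring
            _ ≤ K ^ 2 * (b - a) * Real.exp m :=
                mul_le_mul_of_nonneg_right (mul_le_mul_of_nonneg_right hKsq hba.le)
                  (Real.exp_pos m).le
end

section
/- Let p > 1 and let u : ℝ → ℂ be locally integrable. Then for every bounded interval I ⊂ ℝ, (1/|I|)∫_I |u(t) − u_I| dt ≤ ( ∫_I ∫_I |u(t) − u(s)|^p / |t − s|² ds dt )^{1/p} ≤ ‖u‖_{B_p}. In particular, ‖u‖_* ≤ ‖u‖_{B_p}. -/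
open MeasureTheory Set Filter Topology
open scoped ENNReal

/-- Hölder's inequality against the constant function 1. -/
lemma holder_one {α : Type*} [MeasurableSpace α] (ν : Measure α) {p : ℝ} (hp : 1 < p)
    {f : α → ℝ≥0∞} (hf : AEMeasurable f ν) :
    ∫⁻ x, f x ∂ν ≤ (∫⁻ x, f x ^ p ∂ν) ^ (1 / p) * (ν Set.univ) ^ (1 - 1 / p) := by
  have hpq := Real.HolderConjugate.conjExponent hp
  have h := ENNReal.lintegral_mul_le_Lp_mul_Lq ν hpq hf
    (aemeasurable_const : AEMeasurable (fun _ => (1 : ℝ≥0∞)) ν)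
  simpa [ENNReal.one_rpow, lintegral_const, one_div, ← hpq.one_sub_inv] using h

/-- The constant computation for the main inequality. -/
lemma const_calc {c : ℝ≥0∞} (hc0 : c ≠ 0) (hct : c ≠ ⊤) {p : ℝ} (hp : 1 < p) (T : ℝ≥0∞) :
    c⁻¹ * (c⁻¹ * ((c ^ 2 * T) ^ (1 / p) * c ^ (1 - 1 / p) * c ^ (1 - 1 / p))) =
      T ^ (1 / p) := by
  have hp0 : p ≠ 0 := by positivity
  have h1 : (c ^ 2 * T) ^ (1 / p) = c ^ (2 * (1 / p)) * T ^ (1 / p) := by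
    rw [ENNReal.mul_rpow_of_nonneg _ _ (by positivity : (0:ℝ) ≤ 1 / p)]
    congr 1
    rw [ENNReal.rpow_mul, ENNReal.rpow_two]
  rw [h1]
  have h2 : c⁻¹ = c ^ (-1 : ℝ) := (ENNReal.rpow_neg_one c).symm
  rw [h2]
  rw [show c ^ (2 * (1/p)) * T ^ (1/p) * c ^ (1 - 1/p) * c ^ (1 - 1/p)
      = (c ^ (2 * (1/p)) * c ^ (1 - 1/p) * c ^ (1 - 1/p)) * T ^ (1/p) by ring]
  rw [← ENNReal.rpow_add _ _ hc0 hct, ← ENNReal.rpow_add _ _ hc0 hct]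
  rw [← mul_assoc, ← mul_assoc, ← ENNReal.rpow_add _ _ hc0 hct,
    ← ENNReal.rpow_add _ _ hc0 hct]
  have hsum : (-1 : ℝ) + -1 + (2 * (1/p) + (1 - 1/p) + (1 - 1/p)) = 0 := by ring
  rw [hsum, ENNReal.rpow_zero, one_mul]

/-- the mean oscillation over an interval is bounded by the `p`-Besov
integral over the square of that interval, hence `‖u‖_* ≤ ‖u‖_{B_p}`. -/
theorem stmt2 (p : ℝ) (hp : 1 < p) (u : ℝ → ℂ) (hu : LocallyIntegrable u) :
    (∀ a b : ℝ, a < b →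
      ENNReal.ofReal (oscAvg u a b) ≤
        (∫⁻ t in Set.Ioo a b, ∫⁻ s in Set.Ioo a b,
            ENNReal.ofReal (‖u t - u s‖ ^ p / (t - s) ^ 2)) ^ (1 / p) ∧
      (∫⁻ t in Set.Ioo a b, ∫⁻ s in Set.Ioo a b,
            ENNReal.ofReal (‖u t - u s‖ ^ p / (t - s) ^ 2)) ^ (1 / p) ≤ besovNorm p u) ∧
    bmoNorm u ≤ besovNorm p u := by
  have hp0 : (0:ℝ) < p := lt_trans one_pos hp
  have hr0 : (0:ℝ) ≤ 1 / p := by positivity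
  have h1p : (0:ℝ) ≤ 1 - 1 / p := by
    have : 1 / p ≤ 1 := by rw [div_le_one hp0]; linarith
    linarith
  have hum : AEMeasurable u (volume : Measure ℝ) := hu.aestronglyMeasurable.aemeasurable
  set v : ℝ → ℂ := hum.mk u with hvdef
  have hv : Measurable v := hum.measurable_mk
  have huv : u =ᵐ[volume] v := hum.ae_eq_mk
  have main : ∀ a b : ℝ, a < b →
      ENNReal.ofReal (oscAvg u a b) ≤
        (∫⁻ t in Set.Ioo a b, ∫⁻ s in Set.Ioo a b,
            ENNReal.ofReal (‖u t - u s‖ ^ p / (t - s) ^ 2)) ^ (1 / p) := by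
    intro a b hab
    have hba : (0:ℝ) < b - a := sub_pos.2 hab
    set c : ℝ≥0∞ := ENNReal.ofReal (b - a) with hc
    have hc0 : c ≠ 0 := (ENNReal.ofReal_pos.2 hba).ne'
    have hct : c ≠ ⊤ := ENNReal.ofReal_ne_top
    have hvolI : volume (Set.Ioo a b) = c := Real.volume_Ioo
    have hμI : volume (Set.Ioo a b) < ⊤ := by rw [hvolI]; exact hct.lt_top
    have huvI : u =ᵐ[volume.restrict (Set.Ioo a b)] v := ae_restrict_of_ae huv
    have hIv : IntegrableOn v (Set.Ioo a b) volume :=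
      ((hu.integrableOn_isCompact isCompact_Icc).mono_set Set.Ioo_subset_Icc_self).congr huvI
    have havg : intervalAvg u a b = intervalAvg v a b := by
      unfold intervalAvg; rw [integral_congr_ae huvI]
    have hosc : oscAvg u a b = oscAvg v a b := by
      unfold oscAvg
      rw [havg, integral_congr_ae (huvI.mono fun t ht => by rw [ht])]
    have hT : (∫⁻ t in Set.Ioo a b, ∫⁻ s in Set.Ioo a b,
          ENNReal.ofReal (‖u t - u s‖ ^ p / (t - s) ^ 2))
        = ∫⁻ t in Set.Ioo a b, ∫⁻ s in Set.Ioo a b,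
          ENNReal.ofReal (‖v t - v s‖ ^ p / (t - s) ^ 2) := by
      apply lintegral_congr_ae
      filter_upwards [huvI] with t ht
      apply lintegral_congr_ae
      filter_upwards [huvI] with s hs
      rw [ht, hs]
    rw [hosc, hT]
    set m := intervalAvg v a b with hm
    set T := ∫⁻ t in Set.Ioo a b, ∫⁻ s in Set.Ioo a b,
        ENNReal.ofReal (‖v t - v s‖ ^ p / (t - s) ^ 2) with hTdef
    set D := ∫⁻ t in Set.Ioo a b, ∫⁻ s in Set.Ioo a b,
        ENNReal.ofReal ‖v t - v s‖ with hD
    set Gp := ∫⁻ t in Set.Ioo a b, ∫⁻ s in Set.Ioo a b,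
        ENNReal.ofReal ‖v t - v s‖ ^ p with hG
    have hconstm : IntegrableOn (fun _ : ℝ => m) (Set.Ioo a b) volume :=
      integrableOn_const hμI.ne
    have hsubm : Integrable (fun t => ‖v t - m‖) (volume.restrict (Set.Ioo a b)) :=
      (hIv.sub hconstm).norm
    have step1 : ENNReal.ofReal (oscAvg v a b)
        = c⁻¹ * ∫⁻ t in Set.Ioo a b, ENNReal.ofReal ‖v t - m‖ := by
      unfold oscAvg
      rw [← hm, ENNReal.ofReal_mul (inv_nonneg.2 hba.le),
        MeasureTheory.ofReal_integral_eq_lintegral_ofReal hsubm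
          (Eventually.of_forall fun t => norm_nonneg _),
        ENNReal.ofReal_inv_of_pos hba]
    have step2 : ∀ t : ℝ, ENNReal.ofReal ‖v t - m‖ ≤
        c⁻¹ * ∫⁻ s in Set.Ioo a b, ENNReal.ofReal ‖v t - v s‖ := by
      intro t
      have hconstt : IntegrableOn (fun _ : ℝ => v t) (Set.Ioo a b) volume :=
        integrableOn_const hμI.ne
      have hsubt : IntegrableOn (fun s => v t - v s) (Set.Ioo a b) volume := hconstt.sub hIv
      have key : v t - m = (b - a)⁻¹ • ∫ s in Set.Ioo a b, (v t - v s) := by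
        rw [integral_sub hconstt hIv, setIntegral_const, measureReal_def, Real.volume_Ioo,
          ENNReal.toReal_ofReal hba.le, smul_sub, smul_smul,
          inv_mul_cancel₀ hba.ne', one_smul, hm]
        rfl
      calc ENNReal.ofReal ‖v t - m‖
          = ENNReal.ofReal ((b - a)⁻¹ * ‖∫ s in Set.Ioo a b, (v t - v s)‖) := by
            rw [key, norm_smul, Real.norm_eq_abs, abs_of_pos (inv_pos.2 hba)]
        _ ≤ ENNReal.ofReal ((b - a)⁻¹ * ∫ s in Set.Ioo a b, ‖v t - v s‖) := by
            apply ENNReal.ofReal_le_ofReal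
            exact mul_le_mul_of_nonneg_left (norm_integral_le_integral_norm _)
              (inv_nonneg.2 hba.le)
        _ = c⁻¹ * ∫⁻ s in Set.Ioo a b, ENNReal.ofReal ‖v t - v s‖ := by
            rw [ENNReal.ofReal_mul (inv_nonneg.2 hba.le), ENNReal.ofReal_inv_of_pos hba,
              MeasureTheory.ofReal_integral_eq_lintegral_ofReal hsubt.norm
                (Eventually.of_forall fun s => norm_nonneg _)]
    have h12 : ENNReal.ofReal (oscAvg v a b) ≤ c⁻¹ * (c⁻¹ * D) := by
      rw [step1]
      apply mul_le_mul_right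
      calc (∫⁻ t in Set.Ioo a b, ENNReal.ofReal ‖v t - m‖)
          ≤ ∫⁻ t in Set.Ioo a b,
              c⁻¹ * ∫⁻ s in Set.Ioo a b, ENNReal.ofReal ‖v t - v s‖ :=
            lintegral_mono fun t => step2 t
        _ = c⁻¹ * D := lintegral_const_mul' _ _ (ENNReal.inv_ne_top.2 hc0)
    have hFmeas : Measurable fun q : ℝ × ℝ => ENNReal.ofReal ‖v q.1 - v q.2‖ :=
      (((hv.comp measurable_fst).sub (hv.comp measurable_snd)).norm).ennreal_ofReal
    have hinner_meas : Measurable fun t =>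
        ∫⁻ s in Set.Ioo a b, ENNReal.ofReal ‖v t - v s‖ ^ p :=
      Measurable.lintegral_prod_right (hFmeas.pow_const p)
    have hIn : ∀ t : ℝ, (∫⁻ s in Set.Ioo a b, ENNReal.ofReal ‖v t - v s‖) ≤
        (∫⁻ s in Set.Ioo a b, ENNReal.ofReal ‖v t - v s‖ ^ p) ^ (1/p) * c ^ (1 - 1/p) := by
      intro t
      have h := holder_one (volume.restrict (Set.Ioo a b)) hp
        (f := fun s => ENNReal.ofReal ‖v t - v s‖)
        (((measurable_const.sub hv).norm.ennreal_ofReal).aemeasurable)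
      rwa [Measure.restrict_apply_univ, hvolI] at h
    have hrw : ∀ x : ℝ≥0∞, (x ^ (1/p)) ^ p = x := by
      intro x
      rw [← ENNReal.rpow_mul, one_div, inv_mul_cancel₀ (ne_of_gt hp0), ENNReal.rpow_one]
    have houter := holder_one (volume.restrict (Set.Ioo a b)) hp
      (f := fun t => (∫⁻ s in Set.Ioo a b, ENNReal.ofReal ‖v t - v s‖ ^ p) ^ (1/p))
      (hinner_meas.pow_const (1/p)).aemeasurable
    rw [Measure.restrict_apply_univ, hvolI] at houter
    simp_rw [hrw] at houter
    have hOut : D ≤ Gp ^ (1/p) * c ^ (1 - 1/p) * c ^ (1 - 1/p) := by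
      calc D ≤ ∫⁻ t in Set.Ioo a b,
            ((∫⁻ s in Set.Ioo a b, ENNReal.ofReal ‖v t - v s‖ ^ p) ^ (1/p) * c ^ (1 - 1/p)) :=
          lintegral_mono fun t => hIn t
        _ = (∫⁻ t in Set.Ioo a b,
              (∫⁻ s in Set.Ioo a b, ENNReal.ofReal ‖v t - v s‖ ^ p) ^ (1/p)) * c ^ (1 - 1/p) :=
          lintegral_mul_const' _ _ (ENNReal.rpow_ne_top_of_nonneg h1p hct)
        _ ≤ Gp ^ (1/p) * c ^ (1 - 1/p) * c ^ (1 - 1/p) := mul_le_mul_left houter _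
    have hGT : Gp ≤ c ^ 2 * T := by
      have hpt : ∀ t ∈ Set.Ioo a b, ∀ s ∈ Set.Ioo a b,
          ENNReal.ofReal ‖v t - v s‖ ^ p ≤
            ENNReal.ofReal ((b-a)^2) * ENNReal.ofReal (‖v t - v s‖ ^ p / (t - s) ^ 2) := by
        intro t ht s hs
        rw [ENNReal.ofReal_rpow_of_nonneg (norm_nonneg _) hp0.le,
          ← ENNReal.ofReal_mul (by positivity : (0:ℝ) ≤ (b-a)^2)]
        apply ENNReal.ofReal_le_ofReal
        have hX : (0:ℝ) ≤ ‖v t - v s‖ ^ p := Real.rpow_nonneg (norm_nonneg _) p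
        rcases eq_or_ne t s with h | h
        · subst h
          simp [Real.zero_rpow (ne_of_gt hp0)]
        · have hts : (0:ℝ) < (t-s)^2 := by
            have := sub_ne_zero.2 h
            positivity
          have hle : (t-s)^2 ≤ (b-a)^2 := by
            obtain ⟨ht1, ht2⟩ := ht
            obtain ⟨hs1, hs2⟩ := hs
            nlinarith
          calc ‖v t - v s‖ ^ p
              = ‖v t - v s‖ ^ p / (t-s)^2 * (t-s)^2 := (div_mul_cancel₀ _ hts.ne').symm
            _ ≤ ‖v t - v s‖ ^ p / (t-s)^2 * (b-a)^2 :=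
                mul_le_mul_of_nonneg_left hle (div_nonneg hX hts.le)
            _ = (b-a)^2 * (‖v t - v s‖ ^ p / (t-s)^2) := mul_comm _ _
      calc Gp ≤ ∫⁻ t in Set.Ioo a b, ∫⁻ s in Set.Ioo a b,
            ENNReal.ofReal ((b-a)^2) * ENNReal.ofReal (‖v t - v s‖ ^ p / (t - s) ^ 2) :=
          setLIntegral_mono' measurableSet_Ioo fun t ht =>
            setLIntegral_mono' measurableSet_Ioo (hpt t ht)
        _ = ∫⁻ t in Set.Ioo a b, ENNReal.ofReal ((b-a)^2) *
              ∫⁻ s in Set.Ioo a b, ENNReal.ofReal (‖v t - v s‖ ^ p / (t - s) ^ 2) :=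
          lintegral_congr fun t => lintegral_const_mul' _ _ ENNReal.ofReal_ne_top
        _ = ENNReal.ofReal ((b-a)^2) * T := lintegral_const_mul' _ _ ENNReal.ofReal_ne_top
        _ = c ^ 2 * T := by rw [hc, ← ENNReal.ofReal_pow hba.le]
    calc ENNReal.ofReal (oscAvg v a b) ≤ c⁻¹ * (c⁻¹ * D) := h12
      _ ≤ c⁻¹ * (c⁻¹ * (Gp ^ (1/p) * c ^ (1 - 1/p) * c ^ (1 - 1/p))) :=
        mul_le_mul_right (mul_le_mul_right hOut _) _
      _ ≤ c⁻¹ * (c⁻¹ * ((c ^ 2 * T) ^ (1/p) * c ^ (1 - 1/p) * c ^ (1 - 1/p))) := by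
        apply mul_le_mul_right
        apply mul_le_mul_right
        apply mul_le_mul_left
        apply mul_le_mul_left
        exact ENNReal.rpow_le_rpow hGT hr0
      _ = T ^ (1/p) := const_calc hc0 hct hp T
  have part2 : ∀ a b : ℝ, (∫⁻ t in Set.Ioo a b, ∫⁻ s in Set.Ioo a b,
        ENNReal.ofReal (‖u t - u s‖ ^ p / (t - s) ^ 2)) ^ (1/p) ≤ besovNorm p u := by
    intro a b
    unfold besovNorm
    refine ENNReal.rpow_le_rpow ?_ hr0
    refine le_trans (lintegral_mono fun t => setLIntegral_le_lintegral _ _) ?_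
    exact setLIntegral_le_lintegral _ _
  refine ⟨fun a b hab => ⟨main a b hab, part2 a b⟩, ?_⟩
  unfold bmoNorm
  exact iSup_le fun a => iSup_le fun b => iSup_le fun hab =>
    (main a b hab).trans (part2 a b)
end

section
/- Let p > 1 and let u : ℝ → ℂ be locally integrable with ‖u‖_{B_p} < ∞. Then u is of vanishing mean oscillation: for every ε > 0 there exists δ > 0 such that every bounded interval I ⊂ ℝ with |I| ≤ δ satisfies (1/|I|)∫_I |u(t) − u_I| dt ≤ ε. -/
open MeasureTheory Set Filter Topology
open scoped ENNReal

/-!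
Since `‖u t - u_I‖ ≤ ⨍_I ‖u t - u s‖ ds`, the mean oscillation of `u` on `I` is at most the mean
of `‖u t - u s‖` over `I × I`, hence by Jensen at most `(|I|⁻² ∫∫_{I×I} ‖u t - u s‖ ^ p)^(1/p)`.
As `|t - s| ≤ |I|` on `I × I`, this is bounded by `(∫∫_{I×I} ‖u t - u s‖ ^ p / |t - s| ^ 2)^(1/p)`,
the Besov energy of `I × I`, which tends to `0` with `|I × I| = |I|²` by absolute continuity of
the integral of an integrable function.
-/

noncomputable def besovIntegrand (p : ℝ) (u : ℝ → ℂ) (z : ℝ × ℝ) : ℝ≥0∞ :=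
  ENNReal.ofReal (‖u z.1 - u z.2‖ ^ p / (z.1 - z.2) ^ 2)

section

variable {p : ℝ} {u : ℝ → ℂ} {a b : ℝ}

theorem aestronglyMeasurable_sub_fst_snd {μ : Measure ℝ} [SFinite μ]
    (hu : AEStronglyMeasurable u μ) :
    AEStronglyMeasurable (fun z : ℝ × ℝ => u z.1 - u z.2) (μ.prod μ) :=
  (hu.comp_quasiMeasurePreserving Measure.quasiMeasurePreserving_fst).sub
    (hu.comp_quasiMeasurePreserving Measure.quasiMeasurePreserving_snd)

theorem lintegral_besovIntegrand_ne_top (hp : 0 < p) (hu : AEStronglyMeasurable u)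
    (hfin : besovNorm p u ≠ ⊤) : ∫⁻ z, besovIntegrand p u z ≠ ⊤ := by
  have hF : AEMeasurable (besovIntegrand p u) (volume.prod volume) := by
    refine ENNReal.measurable_ofReal.comp_aemeasurable (AEMeasurable.div ?_ (by fun_prop))
    exact (aestronglyMeasurable_sub_fst_snd hu).aemeasurable.norm.pow_const p
  rw [Measure.volume_eq_prod, lintegral_prod _ hF]
  rwa [besovNorm, Ne, ENNReal.rpow_eq_top_iff_of_pos (one_div_pos.2 hp)] at hfin

theorem volume_Ioo_prod_Ioo (hab : a ≤ b) :
    volume (Ioo a b ×ˢ Ioo a b) = ENNReal.ofReal ((b - a) ^ 2) := by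
  rw [Measure.volume_eq_prod, Measure.prod_prod, Real.volume_Ioo,
    ENNReal.ofReal_pow (sub_nonneg.2 hab), sq]

theorem enorm_sub_intervalAvg_le (hab : a < b) (hu : IntegrableOn u (Ioo a b)) (t : ℝ) :
    ‖u t - intervalAvg u a b‖ₑ ≤
      (ENNReal.ofReal (b - a))⁻¹ * ∫⁻ s in Ioo a b, ‖u t - u s‖ₑ := by
  have hL : 0 < b - a := sub_pos.2 hab
  have hrepr : u t - intervalAvg u a b = (b - a)⁻¹ • ∫ s in Ioo a b, (u t - u s) := by
    rw [integral_sub (integrableOn_const (C := u t) measure_Ioo_lt_top.ne) hu, setIntegral_const,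
      measureReal_def, Real.volume_Ioo, ENNReal.toReal_ofReal hL.le, smul_sub, smul_smul,
      inv_mul_cancel₀ hL.ne', one_smul, intervalAvg]
  rw [hrepr, enorm_smul, Real.enorm_eq_ofReal (inv_nonneg.2 hL.le), ENNReal.ofReal_inv_of_pos hL]
  gcongr
  exact enorm_integral_le_lintegral_enorm _

theorem ofReal_oscAvg_le_setLIntegral_enorm_sub (hab : a < b) (hu : IntegrableOn u (Ioo a b)) :
    ENNReal.ofReal (oscAvg u a b) ≤
      (ENNReal.ofReal ((b - a) ^ 2))⁻¹ * ∫⁻ z in Ioo a b ×ˢ Ioo a b, ‖u z.1 - u z.2‖ₑ := by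
  have hL : 0 < b - a := sub_pos.2 hab
  have hosc : IntegrableOn (fun t => u t - intervalAvg u a b) (Ioo a b) :=
    hu.sub (integrableOn_const measure_Ioo_lt_top.ne)
  have hprod : AEMeasurable (fun z : ℝ × ℝ => ‖u z.1 - u z.2‖ₑ)
      ((volume.prod volume).restrict (Ioo a b ×ˢ Ioo a b)) := by
    rw [← Measure.prod_restrict]
    exact (aestronglyMeasurable_sub_fst_snd hu.aestronglyMeasurable).enorm
  rw [oscAvg, ENNReal.ofReal_mul (inv_nonneg.2 hL.le), ENNReal.ofReal_inv_of_pos hL,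
    ofReal_integral_norm_eq_lintegral_enorm hosc, Measure.volume_eq_prod,
    setLIntegral_prod _ hprod, ENNReal.ofReal_pow hL.le, sq, ENNReal.mul_inv (by simp) (by simp),
    mul_assoc]
  gcongr
  rw [← lintegral_const_mul' _ _ (by simpa using hL)]
  gcongr with t
  exact enorm_sub_intervalAvg_le hab hu t

theorem enorm_sub_rpow_le_mul_besovIntegrand (hp : 0 < p) {M t s : ℝ} (hts : (t - s) ^ 2 ≤ M) :
    ‖u t - u s‖ₑ ^ p ≤ ENNReal.ofReal M * besovIntegrand p u (t, s) := by
  rcases eq_or_ne t s with rfl | hne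
  · simp [ENNReal.zero_rpow_of_pos hp]
  have hd : 0 < (t - s) ^ 2 := by positivity [sub_ne_zero.2 hne]
  rw [besovIntegrand, ← ofReal_norm, ENNReal.ofReal_rpow_of_nonneg (norm_nonneg _) hp.le,
    ← ENNReal.ofReal_mul (hd.le.trans hts)]
  refine ENNReal.ofReal_le_ofReal ?_
  calc ‖u t - u s‖ ^ p = (t - s) ^ 2 * (‖u t - u s‖ ^ p / (t - s) ^ 2) := by field_simp
    _ ≤ M * (‖u t - u s‖ ^ p / (t - s) ^ 2) := by gcongr

theorem ofReal_oscAvg_le_rpow_setLIntegral_besovIntegrand (hp : 1 ≤ p) (hab : a < b)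
    (hu : IntegrableOn u (Ioo a b)) :
    ENNReal.ofReal (oscAvg u a b) ≤
      (∫⁻ z in Ioo a b ×ˢ Ioo a b, besovIntegrand p u z) ^ (1 / p) := by
  set S := Ioo a b ×ˢ Ioo a b
  set c := ENNReal.ofReal ((b - a) ^ 2)
  have hc0 : c ≠ 0 := by simp [c, sub_ne_zero.2 hab.ne']
  have hctop : c ≠ ⊤ := by simp [c]
  have hf : AEStronglyMeasurable (fun z : ℝ × ℝ => u z.1 - u z.2) (volume.restrict S) := by
    rw [Measure.volume_eq_prod, ← Measure.prod_restrict]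
    exact aestronglyMeasurable_sub_fst_snd hu.aestronglyMeasurable
  have hjensen := eLpNorm'_le_eLpNorm'_mul_rpow_measure_univ one_pos hp hf
  simp only [eLpNorm'_eq_lintegral_enorm, ENNReal.rpow_one, div_one,
    Measure.restrict_apply_univ] at hjensen
  rw [volume_Ioo_prod_Ioo hab.le] at hjensen
  have hpoint : ∫⁻ z in S, ‖u z.1 - u z.2‖ₑ ^ p ≤ c * ∫⁻ z in S, besovIntegrand p u z := by
    rw [← lintegral_const_mul' _ _ hctop]
    refine setLIntegral_mono' (measurableSet_Ioo.prod measurableSet_Ioo) fun z hz => ?_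
    obtain ⟨⟨h1, h2⟩, h3, h4⟩ := hz
    exact enorm_sub_rpow_le_mul_besovIntegrand (by linarith)
      (sq_le_sq' (by linarith) (by linarith))
  calc ENNReal.ofReal (oscAvg u a b) ≤ c⁻¹ * ∫⁻ z in S, ‖u z.1 - u z.2‖ₑ :=
        ofReal_oscAvg_le_setLIntegral_enorm_sub hab hu
    _ ≤ c⁻¹ * ((c * ∫⁻ z in S, besovIntegrand p u z) ^ (1 / p) * c ^ (1 - 1 / p)) := by
      gcongr
      exact hjensen.trans (by gcongr)
    _ = (∫⁻ z in S, besovIntegrand p u z) ^ (1 / p) := by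
      rw [ENNReal.mul_rpow_of_nonneg _ _ (by positivity), mul_right_comm,
        ← ENNReal.rpow_add _ _ hc0 hctop, add_sub_cancel, ENNReal.rpow_one, ← mul_assoc,
        ENNReal.inv_mul_cancel hc0 hctop, one_mul]

end

/-- a function of finite `p`-Besov seminorm has vanishing mean oscillation. -/
theorem stmt3 (p : ℝ) (hp : 1 < p) (u : ℝ → ℂ) (hu : LocallyIntegrable u)
    (hfin : besovNorm p u ≠ ⊤) :
    ∀ ε : ℝ, 0 < ε → ∃ δ : ℝ, 0 < δ ∧
      ∀ a b : ℝ, a < b → b - a ≤ δ → oscAvg u a b ≤ ε := by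
  intro ε hε
  have hp0 : 0 < p := one_pos.trans hp
  obtain ⟨η, hη, habs⟩ := exists_pos_setLIntegral_lt_of_measure_lt
    (lintegral_besovIntegrand_ne_top hp0 hu.aestronglyMeasurable hfin)
    (ENNReal.ofReal_pos.2 (Real.rpow_pos_of_pos hε p)).ne'
  obtain ⟨r, -, hr, hrη⟩ := ENNReal.lt_iff_exists_real_btwn.1 hη
  refine ⟨√r, Real.sqrt_pos.2 (ENNReal.ofReal_pos.1 hr), fun a b hab hba => ?_⟩
  have hsmall : volume (Ioo a b ×ˢ Ioo a b) < η := by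
    rw [volume_Ioo_prod_Ioo hab.le]
    refine lt_of_le_of_lt (ENNReal.ofReal_le_ofReal ?_) hrη
    exact (Real.le_sqrt (sub_pos.2 hab).le (ENNReal.ofReal_pos.1 hr).le).1 hba
  rw [← ENNReal.ofReal_le_ofReal_iff hε.le]
  calc ENNReal.ofReal (oscAvg u a b)
      ≤ (∫⁻ z in Ioo a b ×ˢ Ioo a b, besovIntegrand p u z) ^ (1 / p) :=
        ofReal_oscAvg_le_rpow_setLIntegral_besovIntegrand hp.le hab
          (hu.integrableOn_isCompact isCompact_Icc |>.mono_set Ioo_subset_Icc_self)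
    _ ≤ ENNReal.ofReal (ε ^ p) ^ (1 / p) := by gcongr; exact (habs _ hsmall).le
    _ = ENNReal.ofReal ε := by
      rw [ENNReal.ofReal_rpow_of_nonneg (by positivity) (by positivity),
        ← Real.rpow_mul hε.le, mul_one_div_cancel hp0.ne', Real.rpow_one]
end

section
/- Let p > 1 and let u : ℝ → ℝ be measurable with ‖u‖_{B_p} < ∞. For N > 0 define the truncation u_N(x) = max{min{u(x), N}, −N}, which is bounded. Then ‖u − u_N‖_{B_p} → 0 as N → ∞. Consequently, since ‖·‖_* ≤ ‖·‖_{B_p}, the bounded functions u_N converge to u in the BMO seminorm, i.e. u lies in the closure of L^∞(ℝ) with respect to ‖·‖_*. -/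
open MeasureTheory Set Filter Topology
open scoped ENNReal

/- ## Auxiliary lemmas -/

lemma besov_kernel_meas {p : ℝ} (hp : 0 ≤ p) (w : ℝ → ℂ) (hw : Measurable w) :
    Measurable (fun z : ℝ × ℝ => ENNReal.ofReal (‖w z.1 - w z.2‖ ^ p / (z.1 - z.2) ^ 2)) := by
  apply Measurable.ennreal_ofReal
  exact ((Real.continuous_rpow_const hp).measurable.comp
      ((hw.comp measurable_fst).sub (hw.comp measurable_snd)).norm).div
    ((measurable_fst.sub measurable_snd).pow_const 2)

lemma besov_eq_prod {p : ℝ} (hp : 0 ≤ p) (w : ℝ → ℂ) (hw : Measurable w) :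
    (∫⁻ t : ℝ, ∫⁻ s : ℝ, ENNReal.ofReal (‖w t - w s‖ ^ p / (t - s) ^ 2)) =
      ∫⁻ z : ℝ × ℝ, ENNReal.ofReal (‖w z.1 - w z.2‖ ^ p / (z.1 - z.2) ^ 2)
        ∂((volume : Measure ℝ).prod volume) := by
  exact (lintegral_prod _ (besov_kernel_meas hp w hw).aemeasurable).symm

lemma rpow_alg (K B : ℝ≥0∞) (hK0 : K ≠ 0) (hKt : K ≠ ⊤) {ip iq : ℝ} (hip : 0 ≤ ip)
    (hsum : ip + iq = 1) : K⁻¹ * ((K * B) ^ ip * K ^ iq) = B ^ ip := by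
  rw [ENNReal.mul_rpow_of_nonneg _ _ hip]
  have h1 : K⁻¹ * (K ^ ip * B ^ ip * K ^ iq) = (K⁻¹ * (K ^ ip * K ^ iq)) * B ^ ip := by ring
  rw [h1, ← ENNReal.rpow_add _ _ hK0 hKt, hsum, ENNReal.rpow_one,
    ENNReal.inv_mul_cancel hK0 hKt, one_mul]

/-- BMO seminorm is dominated by the Besov seminorm. -/
lemma bmo_le_besov {p : ℝ} (hp : 1 < p) (w : ℝ → ℂ) (hw : Measurable w) :
    bmoNorm w ≤ besovNorm p w := by
  have hp0 : 0 < p := lt_trans zero_lt_one hp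
  have hpq : p.HolderConjugate (p / (p - 1)) := Real.HolderConjugate.conjExponent hp
  set q : ℝ := p / (p - 1) with hq
  refine iSup_le fun a => iSup_le fun b => iSup_le fun hab => ?_
  set S := Set.Ioo a b with hS
  have hba : 0 < b - a := sub_pos.2 hab
  by_cases hint : IntegrableOn w S volume
  swap
  · have hni : ¬ Integrable (fun t => ‖w t - intervalAvg w a b‖) (volume.restrict S) := by
      intro h
      apply hint
      have h2 : Integrable (fun t => w t - intervalAvg w a b) (volume.restrict S) :=
        (integrable_norm_iff ((hw.sub measurable_const).aestronglyMeasurable)).1 h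
      have h3 := h2.add (integrable_const (intervalAvg w a b))
      have h4 : w = ((fun t => w t - intervalAvg w a b) + fun _ => intervalAvg w a b) := by
        funext t; simp
      rw [IntegrableOn, h4]; exact h3
    unfold oscAvg
    rw [integral_undef hni, mul_zero, ENNReal.ofReal_zero]
    exact zero_le
  -- main case
  have hvolS : volume S = ENNReal.ofReal (b - a) := Real.volume_Ioo
  set c : ℝ≥0∞ := ENNReal.ofReal (b - a) with hc
  have hc0 : c ≠ 0 := by simp only [hc, ne_eq, ENNReal.ofReal_eq_zero, not_le]; exact hba
  have hct : c ≠ ⊤ := ENNReal.ofReal_ne_top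
  set K : ℝ≥0∞ := c * c with hK
  have hK0 : K ≠ 0 := mul_ne_zero hc0 hc0
  have hKt : K ≠ ⊤ := ENNReal.mul_ne_top hct hct
  have hconst : ∀ cc : ℂ, IntegrableOn (fun _ => cc) S volume := fun cc =>
    integrableOn_const (by rw [hvolS]; exact ENNReal.ofReal_ne_top)
  have step1 : ∀ t : ℝ, ‖w t - intervalAvg w a b‖ ≤ (b - a)⁻¹ * ∫ s in S, ‖w t - w s‖ := by
    intro t
    have hrepr : w t - intervalAvg w a b = (b - a)⁻¹ • ∫ s in S, (w t - w s) := by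
      rw [integral_sub (hconst (w t)) hint, integral_const, measureReal_def, Measure.restrict_apply_univ, hvolS,
        ENNReal.toReal_ofReal hba.le, smul_sub, smul_smul, inv_mul_cancel₀ hba.ne', one_smul,
        intervalAvg]
    rw [hrepr, norm_smul, norm_inv, Real.norm_eq_abs, abs_of_pos hba]
    exact mul_le_mul_of_nonneg_left (norm_integral_le_integral_norm _) (inv_nonneg.2 hba.le)
  set c' : ℝ≥0∞ := ENNReal.ofReal (b - a)⁻¹ with hc'
  have hc'c : c' = c⁻¹ := ENNReal.ofReal_inv_of_pos hba
  have hc't : c' ≠ ⊤ := ENNReal.ofReal_ne_top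
  set F : ℝ × ℝ → ℝ≥0∞ := fun z => ENNReal.ofReal ‖w z.1 - w z.2‖ with hFdef
  have hFmeas : Measurable F :=
    (((hw.comp measurable_fst).sub (hw.comp measurable_snd)).norm).ennreal_ofReal
  set ν : Measure (ℝ × ℝ) := (volume.restrict S).prod (volume.restrict S) with hν
  have hosci : Integrable (fun t => ‖w t - intervalAvg w a b‖) (volume.restrict S) :=
    (hint.sub (hconst (intervalAvg w a b))).norm
  have hiter : ∫⁻ t in S, ∫⁻ s in S, F (t, s) = ∫⁻ z, F z ∂ν :=
    (lintegral_prod F hFmeas.aemeasurable).symm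
  have step2 : ENNReal.ofReal (oscAvg w a b) ≤ c' * (c' * ∫⁻ z, F z ∂ν) := by
    rw [oscAvg, ENNReal.ofReal_mul (inv_nonneg.2 hba.le),
      ofReal_integral_eq_lintegral_ofReal hosci
        (Filter.Eventually.of_forall fun t => norm_nonneg _)]
    refine mul_le_mul_right ?_ _
    have inner : ∀ t : ℝ, ENNReal.ofReal ‖w t - intervalAvg w a b‖ ≤
        c' * ∫⁻ s in S, F (t, s) := by
      intro t
      calc ENNReal.ofReal ‖w t - intervalAvg w a b‖
          ≤ ENNReal.ofReal ((b - a)⁻¹ * ∫ s in S, ‖w t - w s‖) :=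
            ENNReal.ofReal_le_ofReal (step1 t)
        _ = c' * ENNReal.ofReal (∫ s in S, ‖w t - w s‖) :=
            ENNReal.ofReal_mul (inv_nonneg.2 hba.le)
        _ = c' * ∫⁻ s in S, F (t, s) := by
            have hInt2 : Integrable (fun s : ℝ => ‖w t - w s‖) (volume.restrict S) :=
              ((hconst (w t)).sub hint).norm
            rw [ofReal_integral_eq_lintegral_ofReal hInt2
              (Filter.Eventually.of_forall fun s => norm_nonneg _)]
    calc ∫⁻ t in S, ENNReal.ofReal ‖w t - intervalAvg w a b‖
        ≤ ∫⁻ t in S, c' * ∫⁻ s in S, F (t, s) := lintegral_mono inner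
      _ = c' * ∫⁻ t in S, ∫⁻ s in S, F (t, s) := lintegral_const_mul' _ _ hc't
      _ = c' * ∫⁻ z, F z ∂ν := by rw [hiter]
  have hνuniv : ν Set.univ = K := by
    rw [hν, ← Set.univ_prod_univ, Measure.prod_prod, Measure.restrict_apply_univ, hvolS]
  have holder : ∫⁻ z, F z ∂ν ≤ (∫⁻ z, F z ^ p ∂ν) ^ (1 / p) * K ^ (1 / q) := by
    have h := ENNReal.lintegral_mul_le_Lp_mul_Lq ν hpq hFmeas.aemeasurable
      (aemeasurable_const (b := (1 : ℝ≥0∞)))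
    simpa [ENNReal.one_rpow, lintegral_one, hνuniv] using h
  set g : ℝ × ℝ → ℝ≥0∞ :=
    fun z => ENNReal.ofReal (‖w z.1 - w z.2‖ ^ p / (z.1 - z.2) ^ 2) with hg
  have hpoint : ∀ᵐ z ∂ν, F z ^ p ≤ K * g z := by
    rw [hν, Measure.prod_restrict]
    filter_upwards [ae_restrict_mem (measurableSet_Ioo.prod measurableSet_Ioo)] with z hz
    obtain ⟨⟨h1, h2⟩, h3, h4⟩ := hz
    have habs : |z.1 - z.2| ≤ b - a := abs_le.2 ⟨by linarith, by linarith⟩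
    have hreal : ‖w z.1 - w z.2‖ ^ p ≤
        (b - a) ^ 2 * (‖w z.1 - w z.2‖ ^ p / (z.1 - z.2) ^ 2) := by
      by_cases hts : z.1 = z.2
      · simp [hts, sub_self, Real.zero_rpow hp0.ne']
      · have hne : z.1 - z.2 ≠ 0 := sub_ne_zero.2 hts
        have hd : 0 < (z.1 - z.2) ^ 2 := by
          rw [← sq_abs]; exact pow_pos (abs_pos.2 hne) 2
        have hdle : (z.1 - z.2) ^ 2 ≤ (b - a) ^ 2 := by
          rw [← sq_abs]; exact pow_le_pow_left₀ (abs_nonneg _) habs 2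
        calc ‖w z.1 - w z.2‖ ^ p
            = (z.1 - z.2) ^ 2 * (‖w z.1 - w z.2‖ ^ p / (z.1 - z.2) ^ 2) :=
              (mul_div_cancel₀ _ hd.ne').symm
          _ ≤ (b - a) ^ 2 * (‖w z.1 - w z.2‖ ^ p / (z.1 - z.2) ^ 2) :=
              mul_le_mul_of_nonneg_right hdle
                (div_nonneg (Real.rpow_nonneg (norm_nonneg _) _) hd.le)
    calc F z ^ p = ENNReal.ofReal (‖w z.1 - w z.2‖ ^ p) :=
          ENNReal.ofReal_rpow_of_nonneg (norm_nonneg _) hp0.le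
      _ ≤ ENNReal.ofReal ((b - a) ^ 2 * (‖w z.1 - w z.2‖ ^ p / (z.1 - z.2) ^ 2)) :=
          ENNReal.ofReal_le_ofReal hreal
      _ = K * g z := by
          rw [ENNReal.ofReal_mul (by positivity), hg, hK, hc, sq, ENNReal.ofReal_mul hba.le]
  have hFp : ∫⁻ z, F z ^ p ∂ν ≤
      K * ∫⁻ z, g z ∂((volume : Measure ℝ).prod volume) := by
    calc ∫⁻ z, F z ^ p ∂ν ≤ ∫⁻ z, K * g z ∂ν := lintegral_mono_ae hpoint
      _ = K * ∫⁻ z, g z ∂ν := lintegral_const_mul' _ _ hKt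
      _ ≤ K * ∫⁻ z, g z ∂((volume : Measure ℝ).prod volume) := by
          refine mul_le_mul_right ?_ _
          rw [hν, Measure.prod_restrict]
          exact lintegral_mono' Measure.restrict_le_self le_rfl
  set Bint : ℝ≥0∞ := ∫⁻ z, g z ∂((volume : Measure ℝ).prod volume) with hB
  have hfinal : ENNReal.ofReal (oscAvg w a b) ≤ Bint ^ (1 / p) := by
    calc ENNReal.ofReal (oscAvg w a b)
        ≤ c' * (c' * ∫⁻ z, F z ∂ν) := step2
      _ ≤ c' * (c' * ((∫⁻ z, F z ^ p ∂ν) ^ (1 / p) * K ^ (1 / q))) :=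
          mul_le_mul_right (mul_le_mul_right holder _) _
      _ ≤ c' * (c' * ((K * Bint) ^ (1 / p) * K ^ (1 / q))) :=
          mul_le_mul_right (mul_le_mul_right
            (mul_le_mul_left (ENNReal.rpow_le_rpow hFp (by positivity)) _) _) _
      _ = K⁻¹ * ((K * Bint) ^ (1 / p) * K ^ (1 / q)) := by
          rw [hc'c, ← mul_assoc, ← ENNReal.mul_inv (Or.inl hc0) (Or.inl hct), ← hK]
      _ = Bint ^ (1 / p) := rpow_alg K Bint hK0 hKt (by positivity)
          (by rw [one_div, one_div]; exact hpq.inv_add_inv_eq_one)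
  rw [besovNorm, besov_eq_prod hp0.le w hw]
  exact hfinal

/-- The clamping function is monotone and `1`-Lipschitz, so the residual is `1`-Lipschitz. -/
lemma resid_lip (N x y : ℝ) :
    |(x - max (min x N) (-N)) - (y - max (min y N) (-N))| ≤ |x - y| := by
  have key : ∀ x y : ℝ, x ≤ y →
      |(y - max (min y N) (-N)) - (x - max (min x N) (-N))| ≤ |y - x| := by
    intro x y hxy
    have hmono : max (min x N) (-N) ≤ max (min y N) (-N) :=
      max_le_max (min_le_min hxy le_rfl) le_rfl
    have hlip : |max (min y N) (-N) - max (min x N) (-N)| ≤ |y - x| := by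
      calc |max (min y N) (-N) - max (min x N) (-N)| ≤ |min y N - min x N| :=
            abs_max_sub_max_le_abs _ _ _
        _ ≤ max |y - x| |N - N| := abs_min_sub_min_le_max _ _ _ _
        _ = |y - x| := by simp
    have h1 : max (min y N) (-N) - max (min x N) (-N) ≤ y - x := by
      have := (abs_le.1 hlip).2
      rwa [abs_of_nonneg (sub_nonneg.2 hxy)] at this
    rw [abs_of_nonneg (sub_nonneg.2 hxy)]
    rw [abs_le]
    constructor <;> [linarith; linarith]
  rcases le_total x y with h | h
  · rw [abs_sub_comm, abs_sub_comm x y]; exact key x y h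
  · exact key y x h

lemma clamp_eq {N x : ℝ} (h : |x| ≤ N) : max (min x N) (-N) = x := by
  obtain ⟨h1, h2⟩ := abs_le.1 h
  rw [min_eq_left h2, max_eq_left h1]

noncomputable def trGker (p : ℝ) (u : ℝ → ℝ) (N : ℝ) (z : ℝ × ℝ) : ℝ≥0∞ :=
  ENNReal.ofReal (‖((u z.1 - max (min (u z.1) N) (-N) : ℝ) : ℂ) -
    ((u z.2 - max (min (u z.2) N) (-N) : ℝ) : ℂ)‖ ^ p / (z.1 - z.2) ^ 2)

noncomputable def boundKer (p : ℝ) (u : ℝ → ℝ) (z : ℝ × ℝ) : ℝ≥0∞ :=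
  ENNReal.ofReal (‖((u z.1 : ℝ) : ℂ) - ((u z.2 : ℝ) : ℂ)‖ ^ p / (z.1 - z.2) ^ 2)

lemma trGker_le (p : ℝ) (hp0 : 0 < p) (u : ℝ → ℝ) (N : ℝ) (z : ℝ × ℝ) :
    trGker p u N z ≤ boundKer p u z := by
  apply ENNReal.ofReal_le_ofReal
  have hnorm : ‖((u z.1 - max (min (u z.1) N) (-N) : ℝ) : ℂ) -
      ((u z.2 - max (min (u z.2) N) (-N) : ℝ) : ℂ)‖ ≤ ‖((u z.1 : ℝ) : ℂ) - ((u z.2 : ℝ) : ℂ)‖ := by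
    rw [← Complex.ofReal_sub, ← Complex.ofReal_sub, Complex.norm_real, Complex.norm_real,
      Real.norm_eq_abs, Real.norm_eq_abs]
    exact resid_lip N (u z.1) (u z.2)
  have h2 : (0:ℝ) ≤ (z.1 - z.2) ^ 2 := sq_nonneg _
  gcongr

lemma trGker_lim (p : ℝ) (hp0 : 0 < p) (u : ℝ → ℝ) (z : ℝ × ℝ) :
    Tendsto (fun N : ℝ => trGker p u N z) atTop (𝓝 0) := by
  refine tendsto_const_nhds.congr' ?_
  filter_upwards [eventually_ge_atTop (max |u z.1| |u z.2|)] with N hN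
  have h1 : max (min (u z.1) N) (-N) = u z.1 := clamp_eq ((le_max_left _ _).trans hN)
  have h2 : max (min (u z.2) N) (-N) = u z.2 := clamp_eq ((le_max_right _ _).trans hN)
  simp [trGker, h1, h2, Real.zero_rpow hp0.ne']

set_option maxHeartbeats 1000000 in
/-- the truncations `u_N = max(min(u, N), −N)` are bounded and converge to `u`
in the `p`-Besov seminorm, hence in the BMO seminorm; so `u` is in the BMO-closure of `L^∞`. -/
theorem stmt4 (p : ℝ) (hp : 1 < p) (u : ℝ → ℝ) (hmeas : Measurable u)
    (hfin : besovNorm p (fun x => (u x : ℂ)) ≠ ⊤) :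
    (∀ N : ℝ, 0 < N → ∀ x : ℝ, |max (min (u x) N) (-N)| ≤ N) ∧
    Tendsto (fun N : ℝ =>
        besovNorm p (fun x => ((u x - max (min (u x) N) (-N) : ℝ) : ℂ)))
      atTop (𝓝 0) ∧
    Tendsto (fun N : ℝ =>
        bmoNorm (fun x => ((u x - max (min (u x) N) (-N) : ℝ) : ℂ)))
      atTop (𝓝 0) ∧
    ∀ ε : ℝ, 0 < ε → ∃ v : ℝ → ℝ, (∃ M : ℝ, ∀ x, |v x| ≤ M) ∧
      bmoNorm (fun x => ((u x - v x : ℝ) : ℂ)) ≤ ENNReal.ofReal ε := by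
  have hp0 : 0 < p := lt_trans zero_lt_one hp
  have hwmeas : ∀ N : ℝ,
      Measurable (fun x => ((u x - max (min (u x) N) (-N) : ℝ) : ℂ)) := fun N =>
    Complex.measurable_ofReal.comp (hmeas.sub ((hmeas.min measurable_const).max measurable_const))
  have hGmeas : ∀ N : ℝ, Measurable (trGker p u N) := fun N => by
    have h := besov_kernel_meas hp0.le
      (fun x => ((u x - max (min (u x) N) (-N) : ℝ) : ℂ)) (hwmeas N)
    unfold trGker
    exact h
  have h_fin : ∫⁻ z, boundKer p u z ∂((volume : Measure ℝ).prod volume) ≠ ⊤ := by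
    intro htop
    apply hfin
    rw [besovNorm, besov_eq_prod hp0.le (fun x => ((u x : ℝ) : ℂ))
      (Complex.measurable_ofReal.comp hmeas)]
    have : (∫⁻ z : ℝ × ℝ, ENNReal.ofReal
        (‖((u z.1 : ℝ) : ℂ) - ((u z.2 : ℝ) : ℂ)‖ ^ p / (z.1 - z.2) ^ 2)
        ∂((volume : Measure ℝ).prod volume)) = ⊤ := htop
    rw [this]
    exact ENNReal.top_rpow_of_pos (by positivity)
  have htend : Tendsto (fun N : ℝ => ∫⁻ z, trGker p u N z ∂((volume : Measure ℝ).prod volume))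
      atTop (𝓝 0) := by
    have h := tendsto_lintegral_filter_of_dominated_convergence
      (μ := (volume : Measure ℝ).prod volume) (f := fun _ => (0 : ℝ≥0∞)) (boundKer p u)
      (Filter.Eventually.of_forall hGmeas)
      (Filter.Eventually.of_forall fun N => ae_of_all _ (trGker_le p hp0 u N))
      h_fin (ae_of_all _ (trGker_lim p hp0 u))
    simpa using h
  have key2 : Tendsto (fun N : ℝ =>
      besovNorm p (fun x => ((u x - max (min (u x) N) (-N) : ℝ) : ℂ)))
      atTop (𝓝 0) := by
    have h := htend.ennrpow_const (1 / p)
    rw [ENNReal.zero_rpow_of_pos (by positivity)] at h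
    refine h.congr fun N => ?_
    rw [besovNorm, besov_eq_prod hp0.le
      (fun x => ((u x - max (min (u x) N) (-N) : ℝ) : ℂ)) (hwmeas N)]
    rfl
  have key3 : Tendsto (fun N : ℝ =>
      bmoNorm (fun x => ((u x - max (min (u x) N) (-N) : ℝ) : ℂ)))
      atTop (𝓝 0) :=
    tendsto_of_tendsto_of_tendsto_of_le_of_le tendsto_const_nhds key2
      (fun N => zero_le) (fun N => bmo_le_besov hp _ (hwmeas N))
  refine ⟨?_, key2, key3, ?_⟩
  · intro N hN x
    exact abs_le.2 ⟨le_max_right _ _, max_le (min_le_right _ _) (by linarith)⟩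
  · intro ε hε
    obtain ⟨N, hN⟩ := (key3.eventually_lt_const (ENNReal.ofReal_pos.2 hε)).exists
    refine ⟨fun x => max (min (u x) N) (-N), ⟨|N|, fun x => ?_⟩, hN.le⟩
    refine abs_le.2 ⟨?_, max_le ((min_le_right _ _).trans (le_abs_self N)) ?_⟩
    · exact le_trans (neg_le_neg (le_abs_self N)) (le_max_right _ _)
    · exact le_trans (le_abs_self (-N)) (abs_neg N).le
end

section
/- Let C₀, C_JN > 0 be constants for which the John–Nirenberg inequality holds on ℝ (for every locally integrable u : ℝ → ℂ with 0 < ‖u‖_* < ∞, every bounded interval I ⊂ ℝ, and every λ > 0, one has |{t ∈ I : |u(t) − u_I| ≥ λ}| ≤ C₀ |I| exp(−C_JN λ / ‖u‖_*)). Let C > 0, let φ : ℝ → ℂ be measurable with |φ(x)| ≤ C e^{−|x|} for all x, let u : ℝ → ℂ be locally integrable with ‖u‖_* < ∞, and let k > 0. Then there exists a constant C(k) > 0, depending only on k, C, C₀ and C_JN, such that for all x ∈ ℝ and y > 0, ∫_ℝ |φ_y(x − t)| · |u(t) − u_{I(x,y)}|^k dt ≤ C(k) ‖u‖_*^k. 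-/
open MeasureTheory Set Filter Topology
open scoped ENNReal

lemma integrableOn_Ioo {u : ℝ → ℂ} (hu : LocallyIntegrable u) (a b : ℝ) :
    IntegrableOn u (Set.Ioo a b) :=
  (hu.integrableOn_isCompact isCompact_Icc).mono_set Ioo_subset_Icc_self

lemma oscAvg_nonneg {u : ℝ → ℂ} {a b : ℝ} (h : a < b) : 0 ≤ oscAvg u a b := by
  apply mul_nonneg (inv_nonneg.2 (by linarith))
  exact integral_nonneg fun t => norm_nonneg _

lemma oscAvg_le {u : ℝ → ℂ} (hu : bmoNorm u ≠ ⊤) {a b : ℝ} (h : a < b) :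
    oscAvg u a b ≤ (bmoNorm u).toReal := by
  have h1 : ENNReal.ofReal (oscAvg u a b) ≤ bmoNorm u := by
    refine le_iSup_of_le a ?_
    refine le_iSup_of_le b ?_
    exact le_iSup_of_le h le_rfl
  have := ENNReal.toReal_mono hu h1
  rwa [ENNReal.toReal_ofReal (oscAvg_nonneg h)] at this

lemma osc_integral_eq {u : ℝ → ℂ} (hu : LocallyIntegrable u) {a b : ℝ} (h : a < b) :
    (∫ t in Set.Ioo a b, ‖u t - intervalAvg u a b‖) = (b - a) * oscAvg u a b := by
  rw [oscAvg, ← mul_assoc, mul_inv_cancel₀ (by linarith : b - a ≠ 0), one_mul]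

/-- `avg_small - c = (b-a)⁻¹ • ∫_small (u - c)` and bound by integral over big interval. -/
lemma norm_avg_sub_le {u : ℝ → ℂ} (hu : LocallyIntegrable u) {a b a' b' : ℝ}
    (h : a < b) (ha : a' ≤ a) (hb : b ≤ b') :
    ‖intervalAvg u a b - intervalAvg u a' b'‖ ≤
      (b - a)⁻¹ * ((b' - a') * oscAvg u a' b') := by
  have h' : a' < b' := lt_of_le_of_lt ha (lt_of_lt_of_le h hb)
  set c := intervalAvg u a' b'
  have hsub : Set.Ioo a b ⊆ Set.Ioo a' b' := Ioo_subset_Ioo ha hb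
  have hInt : IntegrableOn u (Set.Ioo a b) := integrableOn_Ioo hu a b
  have hvol : (volume (Set.Ioo a b)).toReal = b - a := by
    simp [Real.volume_Ioo, ENNReal.toReal_ofReal (by linarith : (0:ℝ) ≤ b - a)]
  have key : intervalAvg u a b - c = (b - a)⁻¹ • ∫ t in Set.Ioo a b, (u t - c) := by
    rw [integral_sub hInt (integrableOn_const (by simp [Real.volume_Ioo]))]
    rw [setIntegral_const, show volume.real (Set.Ioo a b) = b - a from hvol, intervalAvg, smul_sub, smul_smul]
    congr 1
    rw [inv_mul_cancel₀ (by linarith : b - a ≠ 0), one_smul]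
  rw [key, norm_smul, norm_inv, Real.norm_eq_abs, abs_of_pos (by linarith : (0:ℝ) < b - a)]
  refine mul_le_mul_of_nonneg_left ?_ (inv_nonneg.2 (by linarith))
  calc ‖∫ t in Set.Ioo a b, (u t - c)‖ ≤ ∫ t in Set.Ioo a b, ‖u t - c‖ :=
        norm_integral_le_integral_norm _
    _ ≤ ∫ t in Set.Ioo a' b', ‖u t - c‖ := by
        apply setIntegral_mono_set
        · exact ((integrableOn_Ioo hu a' b').sub (integrableOn_const
            (by simp [Real.volume_Ioo]))).norm
        · exact Filter.Eventually.of_forall fun t => norm_nonneg _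
        · exact HasSubset.Subset.eventuallyLE hsub
    _ = (b' - a') * oscAvg u a' b' := osc_integral_eq hu h'

lemma avg_dyadic_bound {u : ℝ → ℂ} (hu : LocallyIntegrable u) (htop : bmoNorm u ≠ ⊤)
    {x y : ℝ} (hy : 0 < y) (j : ℕ) :
    ‖intervalAvg u (x - 2^j*y) (x + 2^j*y) - intervalAvg u (x - y) (x + y)‖ ≤
      2 * j * (bmoNorm u).toReal := by
  induction j with
  | zero => simp
  | succ j ih =>
      have hN : 0 ≤ (bmoNorm u).toReal := ENNReal.toReal_nonneg
      have hpow : (0:ℝ) < 2^j := by positivity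
      have hpow' : (0:ℝ) < 2^(j+1) := by positivity
      have hyj : (0:ℝ) < 2^j * y := by positivity
      have hlt : x - 2^j*y < x + 2^j*y := by nlinarith
      have hlt' : x - 2^(j+1)*y < x + 2^(j+1)*y := by nlinarith
      have hstep : ‖intervalAvg u (x - 2^j*y) (x + 2^j*y) -
          intervalAvg u (x - 2^(j+1)*y) (x + 2^(j+1)*y)‖ ≤ 2 * (bmoNorm u).toReal := by
        have h2 : (2:ℝ)^j ≤ 2^(j+1) := by
          apply pow_le_pow_right₀ (by norm_num) (Nat.le_succ j)
        have key := norm_avg_sub_le hu hlt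
          (by nlinarith : x - 2^(j+1)*y ≤ x - 2^j*y)
          (by nlinarith : x + 2^j*y ≤ x + 2^(j+1)*y)
        have heq : (x + 2^j*y - (x - 2^j*y))⁻¹ *
            ((x + 2^(j+1)*y - (x - 2^(j+1)*y)) *
              oscAvg u (x - 2^(j+1)*y) (x + 2^(j+1)*y)) =
            2 * oscAvg u (x - 2^(j+1)*y) (x + 2^(j+1)*y) := by
          have : (2:ℝ)^(j+1) = 2 * 2^j := by ring
          rw [this]
          field_simp
          ring
        rw [heq] at key
        refine le_trans key ?_
        have := oscAvg_le htop hlt'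
        linarith
      calc ‖intervalAvg u (x - 2^(j+1)*y) (x + 2^(j+1)*y) - intervalAvg u (x - y) (x + y)‖
          ≤ ‖intervalAvg u (x - 2^(j+1)*y) (x + 2^(j+1)*y) -
              intervalAvg u (x - 2^j*y) (x + 2^j*y)‖ +
            ‖intervalAvg u (x - 2^j*y) (x + 2^j*y) - intervalAvg u (x - y) (x + y)‖ :=
          norm_sub_le_norm_sub_add_norm_sub _ _ _
        _ ≤ 2 * (bmoNorm u).toReal + 2 * j * (bmoNorm u).toReal := by
            rw [norm_sub_rev]
            exact add_le_add hstep ih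
        _ = 2 * (j+1 : ℕ) * (bmoNorm u).toReal := by push_cast; ring


lemma gamma_lintegral {c k : ℝ} (hc : 0 < c) (hk : 0 < k) :
    ∫⁻ t in Set.Ioi (0:ℝ), ENNReal.ofReal (t ^ (k - 1) * Real.exp (-(c * t))) =
      ENNReal.ofReal ((1 / c) ^ k * Real.Gamma k) := by
  rw [← Real.integral_rpow_mul_exp_neg_mul_Ioi hk hc]
  rw [ofReal_integral_eq_lintegral_ofReal]
  · have : IntegrableOn (fun x : ℝ => x ^ (k - 1) * Real.exp (-c * x ^ (1:ℝ)))
        (Set.Ioi 0) := integrableOn_rpow_mul_exp_neg_mul_rpow (by linarith) zero_lt_one hc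
    refine this.congr_fun (fun x hx => ?_) measurableSet_Ioi
    beta_reduce
    rw [Real.rpow_one, neg_mul]
  · filter_upwards [self_mem_ae_restrict (measurableSet_Ioi : MeasurableSet (Set.Ioi (0:ℝ)))]
      with t ht
    exact mul_nonneg (Real.rpow_nonneg (le_of_lt ht) _) (Real.exp_pos _).le

lemma jn_rpow_bound {C₀ CJN : ℝ} (hC₀ : 0 < C₀) (hCJN : 0 < CJN) (hJN : JNineq C₀ CJN)
    {k : ℝ} (hk : 0 < k) {u : ℝ → ℂ} (hu : LocallyIntegrable u)
    (hpos : 0 < bmoNorm u) (htop : bmoNorm u ≠ ⊤) {a b : ℝ} (h : a < b) :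
    ∫⁻ t in Set.Ioo a b, ENNReal.ofReal (‖u t - intervalAvg u a b‖ ^ k) ≤
      ENNReal.ofReal ((k * C₀ * Real.Gamma k / CJN ^ k) * (b - a) *
        (bmoNorm u).toReal ^ k) := by
  set N := (bmoNorm u).toReal with hNdef
  have hN : 0 < N := ENNReal.toReal_pos hpos.ne' htop
  set c := intervalAvg u a b
  set f : ℝ → ℝ := fun t => ‖u t - c‖ with hf
  have f_mble : AEMeasurable f (volume.restrict (Set.Ioo a b)) :=
    (((hu.aestronglyMeasurable.sub aestronglyMeasurable_const).norm).aemeasurable).restrict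
  have key := lintegral_rpow_eq_lintegral_meas_le_mul (volume.restrict (Set.Ioo a b))
    (Filter.Eventually.of_forall fun t => norm_nonneg _) f_mble hk
  rw [key]
  have step : ∫⁻ t in Set.Ioi (0:ℝ),
      (volume.restrict (Set.Ioo a b)) {s : ℝ | t ≤ f s} * ENNReal.ofReal (t ^ (k - 1)) ≤
      ∫⁻ t in Set.Ioi (0:ℝ),
        ENNReal.ofReal ((C₀ * (b - a)) * (t ^ (k - 1) * Real.exp (-(CJN / N * t)))) := by
    apply setLIntegral_mono
    · apply Measurable.ennreal_ofReal
      fun_prop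
    · intro t ht
      have hres : (volume.restrict (Set.Ioo a b)) {s : ℝ | t ≤ f s} =
          volume {s ∈ Set.Ioo a b | t ≤ ‖u s - c‖} := by
        rw [Measure.restrict_apply' measurableSet_Ioo]
        congr 1
        ext s
        simp [hf, and_comm]
      have hjn := hJN u hu hpos htop a b h t ht
      rw [hres]
      calc volume {s ∈ Set.Ioo a b | t ≤ ‖u s - c‖} * ENNReal.ofReal (t ^ (k - 1))
          ≤ ENNReal.ofReal (C₀ * (b - a) * Real.exp (-(CJN * t) / N)) *
            ENNReal.ofReal (t ^ (k - 1)) := mul_le_mul_left hjn _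
        _ = ENNReal.ofReal ((C₀ * (b - a)) * (t ^ (k - 1) * Real.exp (-(CJN / N * t)))) := by
            rw [← ENNReal.ofReal_mul
              (mul_nonneg (mul_nonneg hC₀.le (by linarith)) (Real.exp_pos _).le)]
            congr 1
            rw [show -(CJN * t) / N = -(CJN / N * t) by ring]
            ring
  refine le_trans (mul_le_mul_right step _) ?_
  have expand : ∀ t : ℝ, ENNReal.ofReal ((C₀ * (b - a)) * (t ^ (k - 1) *
      Real.exp (-(CJN / N * t)))) =
      ENNReal.ofReal (C₀ * (b - a)) * ENNReal.ofReal (t ^ (k - 1) *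
        Real.exp (-(CJN / N * t))) := fun t =>
    ENNReal.ofReal_mul (mul_nonneg hC₀.le (by linarith))
  simp_rw [expand]
  rw [lintegral_const_mul' _ _ ENNReal.ofReal_ne_top,
    gamma_lintegral (div_pos hCJN hN) hk]
  rw [← ENNReal.ofReal_mul (mul_nonneg hC₀.le (by linarith)), ← ENNReal.ofReal_mul hk.le]
  apply ENNReal.ofReal_le_ofReal
  have h1 : (1 / (CJN / N)) ^ k = N ^ k / CJN ^ k := by
    rw [one_div, inv_div, Real.div_rpow hN.le hCJN.le]
  rw [h1]
  have hCk : 0 < CJN ^ k := Real.rpow_pos_of_pos hCJN k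
  apply le_of_eq
  field_simp


lemma ae_eq_avg_restrict {u : ℝ → ℂ} (hu : LocallyIntegrable u) (h0 : bmoNorm u = 0)
    {a b : ℝ} (h : a < b) :
    u =ᵐ[volume.restrict (Set.Ioo a b)] fun _ => intervalAvg u a b := by
  have hosc : oscAvg u a b ≤ 0 := by
    by_contra hc
    push_neg at hc
    have : ENNReal.ofReal (oscAvg u a b) ≤ bmoNorm u :=
      le_iSup_of_le a (le_iSup_of_le b (le_iSup_of_le h le_rfl))
    rw [h0, le_zero_iff, ENNReal.ofReal_eq_zero] at this
    linarith
  have hnn : 0 ≤ oscAvg u a b :=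
    mul_nonneg (inv_nonneg.2 (by linarith)) (integral_nonneg fun t => norm_nonneg _)
  have hosc0 : oscAvg u a b = 0 := le_antisymm hosc hnn
  have hint0 : ∫ t in Set.Ioo a b, ‖u t - intervalAvg u a b‖ = 0 := by
    have := hosc0
    rw [oscAvg] at this
    rcases mul_eq_zero.1 this with h1 | h1
    · exfalso; rw [inv_eq_zero] at h1; linarith
    · exact h1
  have hIntN : Integrable (fun t => ‖u t - intervalAvg u a b‖)
      (volume.restrict (Set.Ioo a b)) :=
    ((integrableOn_Ioo hu a b).sub (integrableOn_const
      (by simp [Real.volume_Ioo]))).norm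
  have := (integral_eq_zero_iff_of_nonneg (fun t => norm_nonneg _) hIntN).1 hint0
  filter_upwards [this] with t ht
  have : ‖u t - intervalAvg u a b‖ = 0 := ht
  rw [norm_eq_zero, sub_eq_zero] at this
  exact this

lemma ae_eq_const_of_bmo_zero {u : ℝ → ℂ} (hu : LocallyIntegrable u) (h0 : bmoNorm u = 0)
    {a b : ℝ} (h : a < b) :
    u =ᵐ[volume] fun _ => intervalAvg u a b := by
  set c := intervalAvg u a b
  have hconst : ∀ n : ℕ, intervalAvg u (a - n) (b + n) = c := by
    intro n
    have hn : a - (n:ℝ) < b + n := by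
      have : (0:ℝ) ≤ n := Nat.cast_nonneg n
      linarith
    have h1 : u =ᵐ[volume.restrict (Set.Ioo a b)] fun _ => intervalAvg u (a-n) (b+n) := by
      have hsub : Set.Ioo a b ⊆ Set.Ioo (a - n) (b + n) := by
        apply Ioo_subset_Ioo <;> · have : (0:ℝ) ≤ n := Nat.cast_nonneg n; linarith
      exact ae_restrict_of_ae_restrict_of_subset hsub (ae_eq_avg_restrict hu h0 hn)
    have h2 : u =ᵐ[volume.restrict (Set.Ioo a b)] fun _ => c := ae_eq_avg_restrict hu h0 h
    have h3 : (fun _ : ℝ => intervalAvg u (a-n) (b+n)) =ᵐ[volume.restrict (Set.Ioo a b)]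
        fun _ => c := h1.symm.trans h2
    haveI : (ae (volume.restrict (Set.Ioo a b))).NeBot := by
      apply ae_neBot.2
      rw [Ne, Measure.restrict_eq_zero, Real.volume_Ioo]
      simp only [ENNReal.ofReal_eq_zero, not_le]
      linarith
    obtain ⟨t, ht⟩ := h3.exists
    exact ht
  have hnull : ∀ n : ℕ, volume ({t : ℝ | u t ≠ c} ∩ Set.Ioo (a - n) (b + n)) = 0 := by
    intro n
    have hn : a - (n:ℝ) < b + n := by
      have : (0:ℝ) ≤ n := Nat.cast_nonneg n
      linarith
    have h1 := ae_eq_avg_restrict hu h0 hn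
    rw [hconst n] at h1
    have h2 : (volume.restrict (Set.Ioo (a-n) (b+n))) {t : ℝ | u t ≠ c} = 0 := h1
    rwa [Measure.restrict_apply' measurableSet_Ioo] at h2
  have hcover : {t : ℝ | u t ≠ c} ⊆ ⋃ n : ℕ, ({t : ℝ | u t ≠ c} ∩ Set.Ioo (a - n) (b + n)) := by
    intro t ht
    obtain ⟨n, hn⟩ := exists_nat_gt (max (a - t) (t - b))
    refine mem_iUnion.2 ⟨n, ht, ?_, ?_⟩
    · have := lt_of_le_of_lt (le_max_left (a-t) (t-b)) hn; linarith
    · have := lt_of_le_of_lt (le_max_right (a-t) (t-b)) hn; linarith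
  have : volume {t : ℝ | u t ≠ c} = 0 :=
    le_antisymm (le_trans (measure_mono hcover) (le_of_eq (measure_iUnion_null hnull)))
      (zero_le)
  exact this


/-- coefficient: `Ecoef 0 = 1`, `Ecoef (j+1) = exp (-2^j)`. -/
noncomputable def Ecoef : ℕ → ℝ
  | 0 => 1
  | (j+1) => Real.exp (-(2^j : ℝ))

lemma Ecoef_pos (j : ℕ) : 0 < Ecoef j := by
  cases j with
  | zero => norm_num [Ecoef]
  | succ j => exact Real.exp_pos _

lemma Ecoef_le (j : ℕ) : Ecoef j ≤ Real.exp 1 * Real.exp (-1) ^ j := by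
  rw [← Real.exp_nat_mul, ← Real.exp_add]
  cases j with
  | zero => simpa [Ecoef] using Real.one_le_exp (by norm_num : (0:ℝ) ≤ 1)
  | succ j =>
      show Real.exp (-(2^j : ℝ)) ≤ _
      apply Real.exp_le_exp.2
      have h2 : (j : ℝ) < 2^j := by
        have := Nat.lt_two_pow_self (n := j)
        exact_mod_cast this
      push_cast
      nlinarith
lemma rpow_add_le {a b k : ℝ} (ha : 0 ≤ a) (hb : 0 ≤ b) (hk : 0 < k) :
    (a + b) ^ k ≤ (2:ℝ) ^ k * (a ^ k + b ^ k) := by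
  have h1 : a + b ≤ 2 * max a b := by
    rcases max_cases a b with ⟨hm, _⟩ | ⟨hm, _⟩ <;> rw [hm] <;> nlinarith [le_max_left a b, le_max_right a b]
  calc (a + b) ^ k ≤ (2 * max a b) ^ k :=
        Real.rpow_le_rpow (by positivity) h1 hk.le
    _ = (2:ℝ)^k * (max a b)^k := Real.mul_rpow (by norm_num) (le_max_of_le_left ha)
    _ ≤ (2:ℝ)^k * (a^k + b^k) := by
        gcongr
        rcases max_cases a b with ⟨hm, _⟩ | ⟨hm, _⟩ <;> rw [hm] <;>
          nlinarith [Real.rpow_nonneg ha k, Real.rpow_nonneg hb k]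

lemma summable_g {Ak k : ℝ} (hAk : 0 ≤ Ak) (hk : 0 < k) :
    Summable (fun j : ℕ => (Ak + (2*(j:ℝ))^k) * 2^j * Ecoef j) := by
  set m := ⌈k⌉₊ with hm
  set r : ℝ := 2 * Real.exp (-1) with hr
  have hr0 : 0 ≤ r := by positivity
  have hr1 : r < 1 := by
    rw [hr, Real.exp_neg]
    rw [mul_inv_lt_iff₀ (Real.exp_pos 1), one_mul]
    nlinarith [Real.exp_one_gt_d9]
  have hbound : ∀ j : ℕ, (Ak + (2*(j:ℝ))^k) * 2^j * Ecoef j ≤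
      Real.exp 1 * (Ak * r ^ j + (2:ℝ)^m * ((j:ℝ)^m * r ^ j)) := by
    intro j
    have h1 : (2*(j:ℝ))^k ≤ (2:ℝ)^m * (j:ℝ)^m := by
      rcases Nat.eq_zero_or_pos j with hj | hj
      · subst hj
        simp only [Nat.cast_zero, mul_zero, Real.zero_rpow hk.ne']
        have : 0 < m := Nat.ceil_pos.2 hk
        simp [zero_pow this.ne']
      · have h2j : (1:ℝ) ≤ 2*(j:ℝ) := by
          have : (1:ℝ) ≤ (j:ℝ) := by exact_mod_cast hj
          linarith
        calc (2*(j:ℝ))^k ≤ (2*(j:ℝ))^(m:ℝ) :=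
              Real.rpow_le_rpow_of_exponent_le h2j (Nat.le_ceil k)
          _ = (2*(j:ℝ))^m := Real.rpow_natCast _ m
          _ = (2:ℝ)^m * (j:ℝ)^m := mul_pow _ _ _
    have h2 : (2:ℝ)^j * Ecoef j ≤ Real.exp 1 * r ^ j := by
      calc (2:ℝ)^j * Ecoef j ≤ (2:ℝ)^j * (Real.exp 1 * Real.exp (-1) ^ j) := by
            have := Ecoef_le j
            gcongr
        _ = Real.exp 1 * r ^ j := by rw [hr, mul_pow]; ring
    calc (Ak + (2*(j:ℝ))^k) * 2^j * Ecoef j = (Ak + (2*(j:ℝ))^k) * ((2:ℝ)^j * Ecoef j) := by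
          ring
      _ ≤ (Ak + (2:ℝ)^m * (j:ℝ)^m) * (Real.exp 1 * r ^ j) := by
          exact mul_le_mul (by linarith) h2
            (mul_nonneg (by positivity) (Ecoef_pos j).le)
            (add_nonneg hAk (by positivity))
      _ = Real.exp 1 * (Ak * r ^ j + (2:ℝ)^m * ((j:ℝ)^m * r ^ j)) := by ring
  apply Summable.of_nonneg_of_le ?_ hbound
  · apply Summable.mul_left
    apply Summable.add
    · exact (summable_geometric_of_lt_one hr0 hr1).mul_left Ak
    · refine Summable.mul_left _ ?_
      have := summable_pow_mul_geometric_of_norm_lt_one m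
        (r := r) (by rwa [Real.norm_eq_abs, abs_of_nonneg hr0])
      exact this
  · intro j
    have h0 : (0:ℝ) ≤ (2*(j:ℝ))^k := Real.rpow_nonneg (by positivity) k
    have := (Ecoef_pos j).le
    positivity


/-- for a kernel with exponential decay, the convolution-type integral of the
`k`-th power of the oscillation of a BMO function is bounded by `C(k) ‖u‖_*^k`, with `C(k)`
depending only on `k`, `C`, `C₀`, `C_JN`. -/
theorem stmt6 (C₀ CJN : ℝ) (hC₀ : 0 < C₀) (hCJN : 0 < CJN) (hJN : JNineq C₀ CJN)
    (C : ℝ) (hC : 0 < C) (k : ℝ) (hk : 0 < k) :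
    ∃ Ck : ℝ, 0 < Ck ∧
      ∀ φ : ℝ → ℂ, Measurable φ → (∀ x, ‖φ x‖ ≤ C * Real.exp (-|x|)) →
      ∀ u : ℝ → ℂ, LocallyIntegrable u → bmoNorm u ≠ ⊤ →
      ∀ x y : ℝ, 0 < y →
        ∫⁻ t : ℝ, ENNReal.ofReal
            (‖dil φ y (x - t)‖ * ‖u t - intervalAvg u (x - y) (x + y)‖ ^ k) ≤
          ENNReal.ofReal (Ck * (bmoNorm u).toReal ^ k) := by
  have hAkpos : 0 < k * C₀ * Real.Gamma k / CJN ^ k :=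
    div_pos (mul_pos (mul_pos hk hC₀) (Real.Gamma_pos_of_pos hk))
      (Real.rpow_pos_of_pos hCJN k)
  set Ak := k * C₀ * Real.Gamma k / CJN ^ k with hAkdef
  set g : ℕ → ℝ := fun j => (Ak + (2*(j:ℝ))^k) * 2^j * Ecoef j with hgdef
  have hgsum : Summable g := summable_g hAkpos.le hk
  have hgnn : ∀ j, 0 ≤ g j := by
    intro j
    have h0 : (0:ℝ) ≤ (2*(j:ℝ))^k := Real.rpow_nonneg (by positivity) k
    have h1 := (Ecoef_pos j).le
    have h2 : (0:ℝ) ≤ Ak + (2*(j:ℝ))^k := by linarith [hAkpos.le]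
    simp only [hgdef]
    positivity
  set S := ∑' j, g j with hSdef
  have hSpos : 0 < S := by
    refine Summable.tsum_pos hgsum hgnn 0 ?_
    show 0 < (Ak + (2*((0:ℕ):ℝ))^k) * 2^0 * Ecoef 0
    simp only [Nat.cast_zero, mul_zero, Real.zero_rpow hk.ne', add_zero, pow_zero, mul_one]
    show 0 < Ak * 1
    linarith [hAkpos]
  refine ⟨C * 2^(k+1) * S,
    mul_pos (mul_pos hC (Real.rpow_pos_of_pos two_pos _)) hSpos, ?_⟩
  intro φ hφm hφ u hu htop x y hy
  set N := (bmoNorm u).toReal with hNdef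
  have hNnn : 0 ≤ N := ENNReal.toReal_nonneg
  have hxy : x - y < x + y := by linarith
  set c₀ := intervalAvg u (x - y) (x + y) with hc₀
  rcases eq_or_ne (bmoNorm u) 0 with h0 | h0
  · -- degenerate case: u is a.e. constant
    have hae := ae_eq_const_of_bmo_zero hu h0 hxy
    have hzero : ∫⁻ t : ℝ, ENNReal.ofReal
        (‖dil φ y (x - t)‖ * ‖u t - c₀‖ ^ k) = 0 := by
      rw [← lintegral_zero]
      apply lintegral_congr_ae
      filter_upwards [hae] with t ht
      have ht' : u t = c₀ := ht
      rw [ht', sub_self, norm_zero, Real.zero_rpow hk.ne', mul_zero, ENNReal.ofReal_zero]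
    rw [hzero]
    exact zero_le
  · have hbpos : 0 < bmoNorm u := pos_iff_ne_zero.2 h0
    have hNpos : 0 < N := ENNReal.toReal_pos h0 htop
    set I : ℕ → Set ℝ := fun j => Set.Ioo (x - 2^j*y) (x + 2^j*y) with hI
    have hIlt : ∀ j : ℕ, x - 2^j*y < x + 2^j*y := by
      intro j
      have : (0:ℝ) < 2^j := by positivity
      nlinarith
    have hImono : Monotone I := by
      intro i j hij
      have h2 : (2:ℝ)^i ≤ 2^j := pow_le_pow_right₀ (by norm_num) hij
      apply Ioo_subset_Ioo <;> nlinarith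
    set B := disjointed I with hB
    have hBmeas : ∀ j, MeasurableSet (B j) :=
      MeasurableSet.disjointed (fun j => measurableSet_Ioo)
    have hBdisj : Pairwise (Function.onFun Disjoint B) := disjoint_disjointed I
    have hBunion : ⋃ j, B j = Set.univ := by
      rw [hB, iUnion_disjointed]
      ext t
      simp only [mem_iUnion, mem_univ, iff_true]
      obtain ⟨n, hn⟩ := exists_nat_gt (|t - x| / y)
      have h1 : |t - x| < 2^n * y := by
        have h2 : |t-x| < n*y := (div_lt_iff₀ hy).1 hn
        have h3 : (n:ℝ) ≤ 2^n := by exact_mod_cast (Nat.lt_two_pow_self (n := n)).le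
        nlinarith
      have h4 := abs_lt.1 h1
      obtain ⟨h5, h6⟩ := h4
      exact ⟨n, by constructor <;> [linarith; linarith]⟩
    -- kernel bound on each piece
    have hker : ∀ j : ℕ, ∀ t ∈ B j, ‖dil φ y (x - t)‖ ≤ C / y * Ecoef j := by
      intro j t htB
      have hdil : ‖dil φ y (x - t)‖ = y⁻¹ * ‖φ ((x - t)/y)‖ := by
        rw [dil, norm_mul, norm_inv, Complex.norm_real, Real.norm_eq_abs, abs_of_pos hy]
      have hexp : Real.exp (-|(x - t)/y|) ≤ Ecoef j := by
        cases j with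
        | zero =>
            show _ ≤ (1:ℝ)
            rw [Real.exp_le_one_iff]
            simp [abs_nonneg]
        | succ j =>
            have hBsucc : B (j+1) = I (j+1) \ I j := by
              rw [hB]; exact hImono.disjointed_succ (not_isMax j)
            have htnot : t ∉ I j := by
              rw [hBsucc] at htB
              exact htB.2
            have habs : 2^j * y ≤ |x - t| := by
              have hm : ¬ (x - 2^j*y < t ∧ t < x + 2^j*y) := by
                intro hcon
                exact htnot (by simpa [hI, Set.mem_Ioo] using hcon)
              rcases not_and_or.1 hm with hcase | hcase
              · rw [not_lt] at hcase
                exact le_abs.2 (Or.inl (by linarith))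
              · rw [not_lt] at hcase
                exact le_abs.2 (Or.inr (by linarith))
            have harg : (2:ℝ)^j ≤ |(x - t)/y| := by
              rw [abs_div, abs_of_pos hy]
              exact (le_div_iff₀ hy).2 (by linarith)
            show _ ≤ Real.exp (-(2^j:ℝ))
            exact Real.exp_le_exp.2 (by linarith)
      rw [hdil]
      calc y⁻¹ * ‖φ ((x - t)/y)‖ ≤ y⁻¹ * (C * Ecoef j) := by
            apply mul_le_mul_of_nonneg_left _ (inv_nonneg.2 hy.le)
            exact le_trans (hφ _) (mul_le_mul_of_nonneg_left hexp hC.le)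
        _ = C / y * Ecoef j := by rw [div_eq_mul_inv]; ring
    have havg : ∀ j : ℕ, ‖intervalAvg u (x - 2^j*y) (x + 2^j*y) - c₀‖ ≤ 2*j*N :=
      fun j => avg_dyadic_bound hu htop hy j
    have hnmeas : ∀ c : ℂ, AEMeasurable (fun t => ‖u t - c‖ ^ k) volume := fun c =>
      (measurable_id.pow_const k).comp_aemeasurable
        (hu.aestronglyMeasurable.sub aestronglyMeasurable_const).norm.aemeasurable
    -- the bound on each piece
    have hpiece : ∀ j : ℕ, (∫⁻ t in B j, ENNReal.ofReal
        (‖dil φ y (x - t)‖ * ‖u t - c₀‖ ^ k)) ≤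
        ENNReal.ofReal (C * 2^(k+1) * N^k * g j) := by
      intro j
      have hab : x - 2^j*y < x + 2^j*y := hIlt j
      have hIj : I j = Set.Ioo (x - 2^j*y) (x + 2^j*y) := rfl
      set cj := intervalAvg u (x - 2^j*y) (x + 2^j*y) with hcj
      have hCyE : 0 ≤ C / y * Ecoef j :=
        mul_nonneg (div_nonneg hC.le hy.le) (Ecoef_pos j).le
      have hjN : (0:ℝ) ≤ 2*(j:ℝ)*N := by positivity
      have h2k : (0:ℝ) ≤ (2:ℝ)^k := (Real.rpow_pos_of_pos two_pos k).le
      calc (∫⁻ t in B j, ENNReal.ofReal (‖dil φ y (x - t)‖ * ‖u t - c₀‖ ^ k))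
          ≤ ∫⁻ t in B j, ENNReal.ofReal ((C / y * Ecoef j) * ‖u t - c₀‖ ^ k) := by
            apply setLIntegral_mono_ae (((hnmeas c₀).const_mul _).ennreal_ofReal.restrict)
            apply Filter.Eventually.of_forall
            intro t htB
            apply ENNReal.ofReal_le_ofReal
            exact mul_le_mul_of_nonneg_right (hker j t htB)
              (Real.rpow_nonneg (norm_nonneg _) k)
        _ = ENNReal.ofReal (C / y * Ecoef j) *
              ∫⁻ t in B j, ENNReal.ofReal (‖u t - c₀‖ ^ k) := by
            simp_rw [ENNReal.ofReal_mul hCyE]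
            rw [lintegral_const_mul' _ _ ENNReal.ofReal_ne_top]
        _ ≤ ENNReal.ofReal (C / y * Ecoef j) *
              ∫⁻ t in I j, ENNReal.ofReal (‖u t - c₀‖ ^ k) :=
            mul_le_mul_right (lintegral_mono_set (disjointed_subset I j)) _
        _ ≤ ENNReal.ofReal (C / y * Ecoef j) * (ENNReal.ofReal ((2:ℝ)^k) *
              (ENNReal.ofReal (Ak * ((x + 2^j*y) - (x - 2^j*y)) * N^k) +
                ENNReal.ofReal ((2*(j:ℝ)*N)^k) *
                  ENNReal.ofReal ((x + 2^j*y) - (x - 2^j*y)))) := by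
            apply mul_le_mul_right
            calc ∫⁻ t in I j, ENNReal.ofReal (‖u t - c₀‖ ^ k)
                ≤ ∫⁻ t in I j, ENNReal.ofReal
                    ((2:ℝ)^k * (‖u t - cj‖^k + (2*(j:ℝ)*N)^k)) := by
                  apply setLIntegral_mono_ae
                    ((((hnmeas cj).add_const _).const_mul _).ennreal_ofReal.restrict)
                  apply Filter.Eventually.of_forall
                  intro t htI
                  apply ENNReal.ofReal_le_ofReal
                  have htri : ‖u t - c₀‖ ≤ ‖u t - cj‖ + 2*(j:ℝ)*N := by
                    have hd : u t - c₀ = (u t - cj) + (cj - c₀) := by ring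
                    calc ‖u t - c₀‖ ≤ ‖u t - cj‖ + ‖cj - c₀‖ := by
                          rw [hd]; exact norm_add_le _ _
                      _ ≤ ‖u t - cj‖ + 2*(j:ℝ)*N := by linarith [havg j]
                  calc ‖u t - c₀‖^k ≤ (‖u t - cj‖ + 2*(j:ℝ)*N)^k :=
                        Real.rpow_le_rpow (norm_nonneg _) htri hk.le
                    _ ≤ (2:ℝ)^k * (‖u t - cj‖^k + (2*(j:ℝ)*N)^k) :=
                        rpow_add_le (norm_nonneg _) hjN hk
              _ = ENNReal.ofReal ((2:ℝ)^k) *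
                    ((∫⁻ t in I j, ENNReal.ofReal (‖u t - cj‖^k)) +
                      ENNReal.ofReal ((2*(j:ℝ)*N)^k) * volume (I j)) := by
                  simp_rw [ENNReal.ofReal_mul h2k,
                    ENNReal.ofReal_add (Real.rpow_nonneg (norm_nonneg _) k)
                      (Real.rpow_nonneg hjN k)]
                  rw [lintegral_const_mul' _ _ ENNReal.ofReal_ne_top,
                    lintegral_add_right _ measurable_const, setLIntegral_const]
              _ ≤ ENNReal.ofReal ((2:ℝ)^k) *
                    (ENNReal.ofReal (Ak * ((x + 2^j*y) - (x - 2^j*y)) * N^k) +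
                      ENNReal.ofReal ((2*(j:ℝ)*N)^k) *
                        ENNReal.ofReal ((x + 2^j*y) - (x - 2^j*y))) := by
                  apply mul_le_mul_right
                  apply add_le_add
                  · exact jn_rpow_bound hC₀ hCJN hJN hk hu hbpos htop hab
                  · rw [hIj, Real.volume_Ioo]
        _ = ENNReal.ofReal ((C / y * Ecoef j) * ((2:ℝ)^k *
              (Ak * ((x + 2^j*y) - (x - 2^j*y)) * N^k +
               (2*(j:ℝ)*N)^k * ((x + 2^j*y) - (x - 2^j*y))))) := by
            have hlen : (0:ℝ) ≤ (x + 2^j*y) - (x - 2^j*y) := by linarith [hab]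
            rw [ENNReal.ofReal_mul hCyE, ENNReal.ofReal_mul h2k,
              ENNReal.ofReal_add (by positivity) (mul_nonneg (Real.rpow_nonneg hjN k) hlen),
              ENNReal.ofReal_mul (Real.rpow_nonneg hjN k)]
        _ ≤ ENNReal.ofReal (C * 2^(k+1) * N^k * g j) := by
            apply ENNReal.ofReal_le_ofReal
            apply le_of_eq
            have hmr : (2*(j:ℝ)*N)^k = (2*(j:ℝ))^k * N^k :=
              Real.mul_rpow (by positivity) hNnn
            have h2k1 : (2:ℝ)^(k+1) = (2:ℝ)^k * 2 := by
              rw [Real.rpow_add two_pos, Real.rpow_one]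
            have hxy2 : (x + 2^j*y) - (x - 2^j*y) = 2*(2^j*y) := by ring
            rw [hmr, h2k1, hxy2]
            simp only [hgdef]
            field_simp
    calc ∫⁻ t : ℝ, ENNReal.ofReal (‖dil φ y (x - t)‖ * ‖u t - c₀‖ ^ k)
        = ∫⁻ t in ⋃ j, B j, ENNReal.ofReal (‖dil φ y (x - t)‖ * ‖u t - c₀‖ ^ k) := by
          rw [hBunion, Measure.restrict_univ]
      _ = ∑' j, ∫⁻ t in B j, ENNReal.ofReal (‖dil φ y (x - t)‖ * ‖u t - c₀‖ ^ k) :=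
          lintegral_iUnion hBmeas hBdisj _
      _ ≤ ∑' j, ENNReal.ofReal (C * 2^(k+1) * N^k * g j) := ENNReal.tsum_le_tsum hpiece
      _ = ENNReal.ofReal (∑' j, C * 2^(k+1) * N^k * g j) := by
          rw [ENNReal.ofReal_tsum_of_nonneg
            (fun j => mul_nonneg (by positivity) (hgnn j)) (hgsum.mul_left _)]
      _ = ENNReal.ofReal (C * 2^(k+1) * S * N^k) := by
          rw [tsum_mul_left]
          congr 1
          ring
end

section
/- Let u : ℝ → ℂ be measurable, let p ≥ 1, and let n ≥ 0 be an integer. Then the following identity of (possibly infinite) integrals holds: ∫_0^∞ ∫_ℝ (1/(2^{n+1} y³)) ( ∫_{−2^n y}^{2^n y} |u(x+t) − u(x)|^p dt ) dx dy = 2^{n−2} ∫_ℝ ∫_ℝ |u(t) − u(s)|^p / |t − s|² ds dt. -/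
open MeasureTheory Set Filter Topology
open scoped ENNReal

lemma indicator_Ioo_eq (n : ℕ) (t y : ℝ) (r : ℝ → ℝ≥0∞) :
    (Set.Ioo (-(2 ^ n * y)) (2 ^ n * y)).indicator (fun _ => r y) t
      = (Set.Ioi (|t| / 2 ^ n)).indicator r y := by
  have hA : (0:ℝ) < 2 ^ n := by positivity
  simp only [Set.indicator_apply, Set.mem_Ioo, Set.mem_Ioi]
  have : (-(2 ^ n * y) < t ∧ t < 2 ^ n * y) ↔ |t| / 2 ^ n < y := by
    rw [← abs_lt, div_lt_iff₀ hA, mul_comm]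
  rw [if_congr this rfl rfl]


/-- the exact identity
`∫_0^∞ ∫_ℝ (1/(2^{n+1} y³)) ∫_{−2^n y}^{2^n y} |u(x+t) − u(x)|^p dt dx dy
  = 2^{n−2} ∫_ℝ ∫_ℝ |u(t) − u(s)|^p / (t − s)² ds dt` of possibly infinite integrals. -/
theorem stmt15 (u : ℝ → ℂ) (hmeas : Measurable u) (p : ℝ) (hp : 1 ≤ p) (n : ℕ) :
    (∫⁻ y in Set.Ioi (0 : ℝ), ∫⁻ x : ℝ,
        (∫⁻ t in Set.Ioo (-(2 ^ n * y)) (2 ^ n * y),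
            ENNReal.ofReal (‖u (x + t) - u x‖ ^ p)) /
          ENNReal.ofReal (2 ^ (n + 1) * y ^ 3)) =
      (2 : ℝ≥0∞) ^ ((n : ℝ) - 2) *
        ∫⁻ t : ℝ, ∫⁻ s : ℝ, ENNReal.ofReal (‖u t - u s‖ ^ p / (t - s) ^ 2) := by
  have hp0 : (0:ℝ) ≤ p := le_trans zero_le_one hp
  have hrpow : Measurable fun x : ℝ => x ^ p := (Real.continuous_rpow_const hp0).measurable
  -- measurability of the basic integrand on the product space
  have hFm : Measurable fun q : ℝ × ℝ => ENNReal.ofReal (‖u (q.1 + q.2) - u q.1‖ ^ p) := by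
    apply ENNReal.measurable_ofReal.comp
    exact hrpow.comp ((hmeas.comp (measurable_fst.add measurable_snd)).sub
      (hmeas.comp measurable_fst)).norm
  set I : ℝ → ℝ≥0∞ := fun t => ∫⁻ x : ℝ, ENNReal.ofReal (‖u (x + t) - u x‖ ^ p) with hIdef
  have hIm : Measurable I := by
    apply Measurable.lintegral_prod_left
    exact hFm
  have hcm : Measurable fun y : ℝ => (ENNReal.ofReal (2 ^ (n + 1) * y ^ 3))⁻¹ :=
    (ENNReal.measurable_ofReal.comp (by fun_prop)).inv
  -- Step 1: rewrite the inner double integral for each y > 0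
  have step1 : (∫⁻ y in Set.Ioi (0 : ℝ), ∫⁻ x : ℝ,
        (∫⁻ t in Set.Ioo (-(2 ^ n * y)) (2 ^ n * y),
            ENNReal.ofReal (‖u (x + t) - u x‖ ^ p)) /
          ENNReal.ofReal (2 ^ (n + 1) * y ^ 3))
      = ∫⁻ y in Set.Ioi (0 : ℝ), ∫⁻ t : ℝ,
          (Set.Ioo (-(2 ^ n * y)) (2 ^ n * y)).indicator
            (fun t => I t * (ENNReal.ofReal (2 ^ (n + 1) * y ^ 3))⁻¹) t := by
    refine setLIntegral_congr_fun measurableSet_Ioi (fun y hy => ?_)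
    have hy0 : (0:ℝ) < y := hy
    set c : ℝ≥0∞ := ENNReal.ofReal (2 ^ (n + 1) * y ^ 3) with hc
    have hswap : AEMeasurable (Function.uncurry fun x t : ℝ =>
        ENNReal.ofReal (‖u (x + t) - u x‖ ^ p))
        (volume.prod (volume.restrict (Set.Ioo (-(2 ^ n * y)) (2 ^ n * y)))) :=
      hFm.aemeasurable
    have hxm : AEMeasurable (fun x : ℝ => ∫⁻ t in Set.Ioo (-(2 ^ n * y)) (2 ^ n * y),
        ENNReal.ofReal (‖u (x + t) - u x‖ ^ p)) volume :=
      (Measurable.lintegral_prod_right' (f := fun q : ℝ × ℝ =>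
        ENNReal.ofReal (‖u (q.1 + q.2) - u q.1‖ ^ p)) hFm).aemeasurable
    calc (∫⁻ x : ℝ, (∫⁻ t in Set.Ioo (-(2 ^ n * y)) (2 ^ n * y),
            ENNReal.ofReal (‖u (x + t) - u x‖ ^ p)) / c)
        = ∫⁻ x : ℝ, (∫⁻ t in Set.Ioo (-(2 ^ n * y)) (2 ^ n * y),
            ENNReal.ofReal (‖u (x + t) - u x‖ ^ p)) * c⁻¹ := by
          simp_rw [div_eq_mul_inv]
      _ = (∫⁻ x : ℝ, ∫⁻ t in Set.Ioo (-(2 ^ n * y)) (2 ^ n * y),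
            ENNReal.ofReal (‖u (x + t) - u x‖ ^ p)) * c⁻¹ :=
          lintegral_mul_const'' _ hxm
      _ = (∫⁻ t in Set.Ioo (-(2 ^ n * y)) (2 ^ n * y), I t) * c⁻¹ := by
          rw [lintegral_lintegral_swap hswap]
      _ = ∫⁻ t in Set.Ioo (-(2 ^ n * y)) (2 ^ n * y), I t * c⁻¹ :=
          (lintegral_mul_const'' _ (hIm.aemeasurable.restrict)).symm
      _ = ∫⁻ t : ℝ, (Set.Ioo (-(2 ^ n * y)) (2 ^ n * y)).indicator (fun t => I t * c⁻¹) t :=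
          (lintegral_indicator measurableSet_Ioo _).symm
  rw [step1]
  -- Step 2: swap the y and t integrals
  have hGm : AEMeasurable (Function.uncurry fun y t : ℝ =>
      (Set.Ioo (-(2 ^ n * y)) (2 ^ n * y)).indicator
        (fun t => I t * (ENNReal.ofReal (2 ^ (n + 1) * y ^ 3))⁻¹) t)
      ((volume.restrict (Set.Ioi (0:ℝ))).prod volume) := by
    have : (Function.uncurry fun y t : ℝ =>
        (Set.Ioo (-(2 ^ n * y)) (2 ^ n * y)).indicator
          (fun t => I t * (ENNReal.ofReal (2 ^ (n + 1) * y ^ 3))⁻¹) t)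
        = fun q : ℝ × ℝ => {q : ℝ × ℝ | -(2 ^ n * q.1) < q.2 ∧ q.2 < 2 ^ n * q.1}.indicator
            (fun q => I q.2 * (ENNReal.ofReal (2 ^ (n + 1) * q.1 ^ 3))⁻¹) q := by
      ext q
      simp only [Function.uncurry, Set.indicator_apply, Set.mem_Ioo, Set.mem_setOf_eq]
    rw [this]
    apply Measurable.aemeasurable
    apply Measurable.indicator
    · exact (hIm.comp measurable_snd).mul (hcm.comp measurable_fst)
    · exact MeasurableSet.inter
        (measurableSet_lt (by fun_prop) measurable_snd)
        (measurableSet_lt measurable_snd (by fun_prop))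
  rw [lintegral_lintegral_swap hGm]
  -- Step 3: compute the inner y integral
  have step3 : ∀ t : ℝ, (∫⁻ y in Set.Ioi (0:ℝ),
      (Set.Ioo (-(2 ^ n * y)) (2 ^ n * y)).indicator
        (fun t => I t * (ENNReal.ofReal (2 ^ (n + 1) * y ^ 3))⁻¹) t)
      = I t * ∫⁻ y in Set.Ioi (0:ℝ),
          (Set.Ioi (|t| / 2 ^ n)).indicator
            (fun y => (ENNReal.ofReal (2 ^ (n + 1) * y ^ 3))⁻¹) y := by
    intro t
    rw [← lintegral_const_mul'' (I t) ((hcm.indicator measurableSet_Ioi).aemeasurable.restrict)]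
    refine lintegral_congr fun y => ?_
    rw [← indicator_Ioo_eq n t y (fun y => (ENNReal.ofReal (2 ^ (n + 1) * y ^ 3))⁻¹)]
    by_cases h : t ∈ Set.Ioo (-(2 ^ n * y)) (2 ^ n * y) <;>
      simp [Set.indicator_apply, h]
  simp_rw [step3]
  -- kernel evaluation for t ≠ 0
  have hker : ∀ t : ℝ, t ≠ 0 → (∫⁻ y in Set.Ioi (0:ℝ),
      (Set.Ioi (|t| / 2 ^ n)).indicator
        (fun y => (ENNReal.ofReal (2 ^ (n + 1) * y ^ 3))⁻¹) y)
      = (2:ℝ≥0∞) ^ ((n:ℝ) - 2) * ENNReal.ofReal ((t ^ 2)⁻¹) := by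
    intro t ht
    have hA : (0:ℝ) < 2 ^ n := by positivity
    set b := |t| / 2 ^ n with hbdef
    have hb : 0 < b := div_pos (abs_pos.mpr ht) hA
    rw [lintegral_indicator measurableSet_Ioi, Measure.restrict_restrict measurableSet_Ioi,
      Set.inter_eq_self_of_subset_left (Set.Ioi_subset_Ioi hb.le)]
    have h1 : ∀ y ∈ Set.Ioi b, (ENNReal.ofReal (2 ^ (n + 1) * y ^ 3))⁻¹
        = ENNReal.ofReal (((2:ℝ) ^ (n + 1))⁻¹ * y ^ (-3 : ℝ)) := by
      intro y hy
      have hy0 : (0:ℝ) < y := hb.trans hy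
      rw [← ENNReal.ofReal_inv_of_pos (by positivity), mul_inv]
      congr 1
      rw [Real.rpow_neg hy0.le, ← Real.rpow_natCast y 3]
      norm_num
    rw [setLIntegral_congr_fun measurableSet_Ioi h1]
    have hint : MeasureTheory.IntegrableOn
        (fun y : ℝ => ((2:ℝ) ^ (n + 1))⁻¹ * y ^ (-3 : ℝ)) (Set.Ioi b) :=
      (integrableOn_Ioi_rpow_of_lt (by norm_num) hb).const_mul _
    have hnn : 0 ≤ᵐ[volume.restrict (Set.Ioi b)]
        fun y : ℝ => ((2:ℝ) ^ (n + 1))⁻¹ * y ^ (-3 : ℝ) := by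
      filter_upwards [ae_restrict_mem measurableSet_Ioi] with y hy
      have : (0:ℝ) < y := hb.trans hy
      positivity
    rw [← MeasureTheory.ofReal_integral_eq_lintegral_ofReal hint hnn,
      MeasureTheory.integral_const_mul, integral_Ioi_rpow_of_lt (by norm_num) hb]
    have h2 : (2:ℝ≥0∞) ^ ((n:ℝ) - 2) = ENNReal.ofReal ((2:ℝ) ^ ((n:ℝ) - 2)) := by
      rw [← ENNReal.ofReal_rpow_of_pos two_pos]
      norm_num
    rw [h2, ← ENNReal.ofReal_mul (by positivity)]
    congr 1
    have h3 : b ^ (-3 + 1 : ℝ) = (b ^ 2)⁻¹ := by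
      rw [show (-3 + 1 : ℝ) = -((2:ℕ):ℝ) by norm_num, Real.rpow_neg hb.le, Real.rpow_natCast]
    have h4 : (2:ℝ) ^ ((n:ℝ) - 2) = 2 ^ n / 4 := by
      rw [Real.rpow_sub two_pos, Real.rpow_natCast,
        show (2:ℝ) = ((2:ℕ):ℝ) by norm_num, Real.rpow_natCast]
      norm_num
    have hb2 : b ^ 2 = t ^ 2 / (2 ^ n) ^ 2 := by rw [hbdef, div_pow, sq_abs]
    rw [h3, h4, hb2]
    have ht2 : t ^ 2 ≠ 0 := pow_ne_zero _ ht
    have h2n : ((2:ℝ) ^ n) ≠ 0 := hA.ne'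
    field_simp
    ring
  -- Step 4: rewrite the right-hand side
  have hRHS : (∫⁻ t : ℝ, ∫⁻ s : ℝ, ENNReal.ofReal (‖u t - u s‖ ^ p / (t - s) ^ 2))
      = ∫⁻ t : ℝ, I t * ENNReal.ofReal ((t ^ 2)⁻¹) := by
    have hswap1 : AEMeasurable (Function.uncurry fun t s : ℝ =>
        ENNReal.ofReal (‖u t - u s‖ ^ p / (t - s) ^ 2)) (volume.prod volume) := by
      apply Measurable.aemeasurable
      apply ENNReal.measurable_ofReal.comp
      apply Measurable.div
      · exact hrpow.comp ((hmeas.comp measurable_fst).sub (hmeas.comp measurable_snd)).norm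
      · fun_prop
    rw [lintegral_lintegral_swap hswap1]
    have inner_eq : ∀ s : ℝ, (∫⁻ t : ℝ, ENNReal.ofReal (‖u t - u s‖ ^ p / (t - s) ^ 2))
        = ∫⁻ h : ℝ, ENNReal.ofReal (‖u (s + h) - u s‖ ^ p) * ENNReal.ofReal ((h ^ 2)⁻¹) := by
      intro s
      rw [← lintegral_add_left_eq_self
        (fun t : ℝ => ENNReal.ofReal (‖u t - u s‖ ^ p / (t - s) ^ 2)) s]
      refine lintegral_congr fun h => ?_
      have hh : s + h - s = h := by ring
      rw [hh, div_eq_mul_inv, ENNReal.ofReal_mul (by positivity)]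
    simp_rw [inner_eq]
    have hswap2 : AEMeasurable (Function.uncurry fun s h : ℝ =>
        ENNReal.ofReal (‖u (s + h) - u s‖ ^ p) * ENNReal.ofReal ((h ^ 2)⁻¹))
        (volume.prod volume) := by
      apply Measurable.aemeasurable
      exact hFm.mul (by fun_prop : Measurable fun q : ℝ × ℝ => ENNReal.ofReal ((q.2 ^ 2)⁻¹))
    rw [lintegral_lintegral_swap hswap2]
    refine lintegral_congr fun h => ?_
    exact lintegral_mul_const'' _ (hFm.comp (measurable_id.prodMk measurable_const)).aemeasurable
  rw [hRHS]
  -- Step 5: conclude by an a.e. identification (away from t = 0)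
  rw [← lintegral_const_mul'' (μ := volume) ((2:ℝ≥0∞) ^ ((n:ℝ) - 2))
    (f := fun t : ℝ => I t * ENNReal.ofReal ((t ^ 2)⁻¹))
    ((hIm.mul (by fun_prop : Measurable fun t : ℝ => ENNReal.ofReal ((t ^ 2)⁻¹))).aemeasurable)]
  refine lintegral_congr_ae ?_
  have hne : ∀ᵐ t : ℝ, t ≠ 0 := by
    refine ae_iff.mpr ?_
    simp only [ne_eq, not_not, setOf_eq_eq_singleton]
    exact measure_singleton 0
  filter_upwards [hne] with t ht
  rw [hker t ht]
  ring
end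

section
/- Let u : ℝ → ℝ be locally integrable with ‖u‖_* < ∞, and let φ(x) = π^{−1/2} e^{−x²} be the Gaussian kernel. Then for all x ∈ ℝ and y > 0, ∫_ℝ φ_y(x − t) e^{u(t) − u_{I(x,y)}} dt ≥ (2/(√π · e)) e^{−‖u‖_*}. -/
open MeasureTheory Set Filter Topology
open scoped ENNReal

/-- the Gaussian convolution of `e^{u − u_{I(x,y)}}` for a real-valued BMO
function `u` is bounded below by `(2/(√π e)) e^{−‖u‖_*}`. -/
theorem stmt16 (u : ℝ → ℝ) (hu : LocallyIntegrable u)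
    (hfin : bmoNorm (fun x => (u x : ℂ)) ≠ ⊤) :
    ∀ x y : ℝ, 0 < y →
      ENNReal.ofReal ((2 / (Real.sqrt π * Real.exp 1)) *
          Real.exp (-(bmoNorm (fun x => (u x : ℂ))).toReal)) ≤
        ∫⁻ t : ℝ, ENNReal.ofReal
          (y⁻¹ * (Real.sqrt π)⁻¹ * Real.exp (-(((x - t) / y) ^ 2)) *
            Real.exp (u t - (2 * y)⁻¹ * ∫ s in Set.Ioo (x - y) (x + y), u s)) := by
  intro x y hy
  by_cases hpi : Real.sqrt π = 0
  · simp [hpi]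
  have hpip : 0 < Real.sqrt π := lt_of_le_of_ne (Real.sqrt_nonneg π) (Ne.symm hpi)
  set c : ℝ := (2 * y)⁻¹ * ∫ s in Set.Ioo (x - y) (x + y), u s with hc
  set I : Set ℝ := Set.Ioo (x - y) (x + y) with hIdef
  have hIm : MeasurableSet I := measurableSet_Ioo
  have hvol : volume I = ENNReal.ofReal (2 * y) := by
    rw [hIdef, Real.volume_Ioo]; ring_nf
  have hvol' : (volume I).toReal = 2 * y := by
    rw [hvol, ENNReal.toReal_ofReal (by positivity)]
  -- reduce to the bound without the exp(-‖u‖_*) factor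
  have hstep0 : ENNReal.ofReal ((2 / (Real.sqrt π * Real.exp 1)) *
      Real.exp (-(bmoNorm (fun x => (u x : ℂ))).toReal)) ≤
      ENNReal.ofReal (2 / (Real.sqrt π * Real.exp 1)) := by
    apply ENNReal.ofReal_le_ofReal
    have h1 : Real.exp (-(bmoNorm (fun x => (u x : ℂ))).toReal) ≤ 1 :=
      Real.exp_le_one_iff.mpr (neg_nonpos.mpr ENNReal.toReal_nonneg)
    exact mul_le_of_le_one_right (by positivity) h1
  refine hstep0.trans ?_
  have hg : ∀ t, 0 ≤ Real.exp (u t - c) := fun t => (Real.exp_pos _).le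
  have hum : AEMeasurable u (volume.restrict I) :=
    hu.aestronglyMeasurable.aemeasurable.restrict
  have hmeas : AEMeasurable (fun t => Real.exp (u t - c)) (volume.restrict I) :=
    Real.measurable_exp.comp_aemeasurable (hum.sub aemeasurable_const)
  have huI : IntegrableOn u I volume := by
    have h1 : IntegrableOn u (Set.Icc (x - y) (x + y)) volume :=
      hu.integrableOn_isCompact isCompact_Icc
    exact h1.mono_set Set.Ioo_subset_Icc_self
  have hcI : IntegrableOn (fun _ => c) I volume :=
    integrableOn_const (by rw [hvol]; exact ENNReal.ofReal_ne_top)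
  have hint : Integrable (fun t => u t - c) (volume.restrict I) := huI.sub hcI
  -- key Jensen bound
  have key : ENNReal.ofReal (2 * y) ≤
      ∫⁻ t in I, ENNReal.ofReal (Real.exp (u t - c)) := by
    by_cases hInt : Integrable (fun t => Real.exp (u t - c)) (volume.restrict I)
    · haveI : IsFiniteMeasure (volume.restrict I) :=
        ⟨by rw [Measure.restrict_apply_univ, hvol]; exact ENNReal.ofReal_lt_top⟩
      haveI : NeZero (volume.restrict I) := by
        refine ⟨fun h => ?_⟩
        rw [Measure.restrict_eq_zero, hvol] at h
        simp only [ENNReal.ofReal_eq_zero] at h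
        linarith
      have havg : (⨍ t, (u t - c) ∂(volume.restrict I)) = 0 := by
        rw [average_eq, integral_sub huI hcI, measureReal_restrict_apply_univ, measureReal_def, hvol']
        rw [setIntegral_const, measureReal_def, hvol', hc, smul_eq_mul, smul_eq_mul]
        have hy2 : (2 * y) ≠ 0 := by positivity
        field_simp
        ring
      have jensen := convexOn_exp.map_average_le Real.continuous_exp.continuousOn
        isClosed_univ (Filter.Eventually.of_forall fun t => Set.mem_univ _) hint hInt
      rw [havg, Real.exp_zero] at jensen
      have h2 : (2 * y : ℝ) ≤ ∫ t in I, Real.exp (u t - c) := by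
        rw [average_eq, measureReal_restrict_apply_univ, measureReal_def, hvol'] at jensen
        have hy2 : (0:ℝ) < 2 * y := by positivity
        rw [smul_eq_mul] at jensen
        calc (2 * y : ℝ) = (2 * y) * 1 := by ring
          _ ≤ (2 * y) * ((2 * y)⁻¹ * ∫ t in I, Real.exp (u t - c)) := by
              exact mul_le_mul_of_nonneg_left jensen hy2.le
          _ = ∫ t in I, Real.exp (u t - c) := by field_simp
      calc ENNReal.ofReal (2 * y) ≤ ENNReal.ofReal (∫ t in I, Real.exp (u t - c)) :=
            ENNReal.ofReal_le_ofReal h2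
        _ = ∫⁻ t in I, ENNReal.ofReal (Real.exp (u t - c)) :=
            ofReal_integral_eq_lintegral_ofReal hInt
              (Filter.Eventually.of_forall fun t => hg t)
    · have htop : (∫⁻ t in I, ENNReal.ofReal (Real.exp (u t - c))) = ⊤ := by
        by_contra h
        apply hInt
        refine ⟨hmeas.aestronglyMeasurable, ?_⟩
        rw [hasFiniteIntegral_iff_ofReal (Filter.Eventually.of_forall fun t => hg t)]
        exact lt_top_iff_ne_top.mpr h
      rw [htop]; exact le_top
  calc ENNReal.ofReal (2 / (Real.sqrt π * Real.exp 1))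
      = ENNReal.ofReal (y⁻¹ * (Real.sqrt π)⁻¹ * (Real.exp 1)⁻¹) *
        ENNReal.ofReal (2 * y) := by
        rw [← ENNReal.ofReal_mul (by positivity)]
        congr 1
        have h1 : Real.sqrt π ≠ 0 := hpi
        have h2 : Real.exp 1 ≠ 0 := (Real.exp_pos 1).ne'
        field_simp
    _ ≤ ENNReal.ofReal (y⁻¹ * (Real.sqrt π)⁻¹ * (Real.exp 1)⁻¹) *
        ∫⁻ t in I, ENNReal.ofReal (Real.exp (u t - c)) := mul_le_mul_right key _
    _ = ∫⁻ t in I, ENNReal.ofReal (y⁻¹ * (Real.sqrt π)⁻¹ * (Real.exp 1)⁻¹) *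
        ENNReal.ofReal (Real.exp (u t - c)) := by
        rw [← lintegral_const_mul' _ _ ENNReal.ofReal_ne_top]
    _ ≤ ∫⁻ t in I, ENNReal.ofReal
          (y⁻¹ * (Real.sqrt π)⁻¹ * Real.exp (-(((x - t) / y) ^ 2)) *
            Real.exp (u t - c)) := by
        apply lintegral_mono_ae
        rw [ae_restrict_iff' hIm]
        refine Filter.Eventually.of_forall fun t ht => ?_
        rw [← ENNReal.ofReal_mul (by positivity)]
        apply ENNReal.ofReal_le_ofReal
        have hsq : ((x - t) / y) ^ 2 ≤ 1 := by
          rw [div_pow, div_le_one (by positivity)]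
          rw [hIdef] at ht
          obtain ⟨h1, h2⟩ := ht
          nlinarith
        have hexp : (Real.exp 1)⁻¹ ≤ Real.exp (-(((x - t) / y) ^ 2)) := by
          rw [← Real.exp_neg]
          exact Real.exp_le_exp.mpr (by linarith)
        have hpos : (0:ℝ) ≤ y⁻¹ * (Real.sqrt π)⁻¹ := by positivity
        have := mul_le_mul_of_nonneg_left hexp hpos
        exact mul_le_mul_of_nonneg_right (by linarith [this]) (hg t)
    _ ≤ ∫⁻ t : ℝ, ENNReal.ofReal
          (y⁻¹ * (Real.sqrt π)⁻¹ * Real.exp (-(((x - t) / y) ^ 2)) *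
            Real.exp (u t - c)) := setLIntegral_le_lintegral _ _
end
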